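/- arXiv:1707.09918 — 4 statements merged into one kernel-verified Lean document; each statement's English description precedes it below -/
import Mathlib

section
/- For β = 1 and any integer α ≥ 1, f_ee(x) = f_nn(x) + (α−1)·f_en(x); equivalently, for every integer k ≥ 1, the number of bounce-free EE-paths in L_{1/α}(k) equals the number of bounce-free NN-paths in L_{1/α}(k) plus (α−1) times the number of bounce-free EN-paths in L_{1/α}(k). -/
/-!
Lattice paths with unit East (`true`) and unit North (`false`) steps,
bounces with respect to the line `y = (β/α)·x`, and the associated
generating functions over `ℚ`.
-/

/-- A lattice path is a list of unit steps: `true` = East, `false` = North. -/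
abbrev LatticePath := List Bool

/-- `p` is a lattice path from `(0,0)` to `(α*k, β*k)`, i.e. a member of `L_{β/α}(k)`. -/
def InL (α β k : ℕ) (p : LatticePath) : Prop :=
  p.count true = α * k ∧ p.count false = β * k

/-- `p` has a left bounce at step index `i`: step `i` is an E-step, step `i+1` is an
N-step, and their common endpoint (the point reached after `i+1` steps) lies on the
line `y = (β/α)·x`, i.e. `α·y = β·x`. -/
def IsLeftBounce (α β : ℕ) (p : LatticePath) (i : ℕ) : Prop :=
  p[i]? = some true ∧ p[i + 1]? = some false ∧
    α * ((p.take (i + 1)).count false) = β * ((p.take (i + 1)).count true)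

/-- `p` has a right bounce at step index `i`: step `i` is an N-step, step `i+1` is an
E-step, and their common endpoint lies on the line `y = (β/α)·x`. -/
def IsRightBounce (α β : ℕ) (p : LatticePath) (i : ℕ) : Prop :=
  p[i]? = some false ∧ p[i + 1]? = some true ∧
    α * ((p.take (i + 1)).count false) = β * ((p.take (i + 1)).count true)

/-- The number of left bounces of `p` with respect to the line `y = (β/α)·x`. -/
noncomputable def leftBounces (α β : ℕ) (p : LatticePath) : ℕ :=
  {i | IsLeftBounce α β p i}.ncard

/-- The number of right bounces of `p` with respect to the line `y = (β/α)·x`. -/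
noncomputable def rightBounces (α β : ℕ) (p : LatticePath) : ℕ :=
  {i | IsRightBounce α β p i}.ncard

/-- `p` is bounce-free: it has no left and no right bounces. -/
def BounceFree (α β : ℕ) (p : LatticePath) : Prop :=
  (∀ i, ¬ IsLeftBounce α β p i) ∧ (∀ i, ¬ IsRightBounce α β p i)

/-- The first step of `p` is `a`. -/
def FirstStep (p : LatticePath) (a : Bool) : Prop := p.head? = some a

/-- The last step of `p` is `b`. -/
def LastStep (p : LatticePath) (b : Bool) : Prop := p.getLast? = some b

/-- The generating function `Σ_{k≥1} |S k|·xᵏ ∈ ℚ[[x]]` of a family of path sets. -/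
noncomputable def gfOf (S : ℕ → Set LatticePath) : PowerSeries ℚ :=
  PowerSeries.mk fun k => if k = 0 then 0 else ((S k).ncard : ℚ)

/-- `g(x) = Σ_{k≥1} C((α+β)k, αk)·xᵏ`, counting all paths in `L_{β/α}(k)`. -/
noncomputable def gSer (α β : ℕ) : PowerSeries ℚ :=
  PowerSeries.mk fun k => if k = 0 then 0 else ((((α + β) * k).choose (α * k) : ℕ) : ℚ)

/-- `g_ee(x) = Σ_{k≥1} C((α+β)k−2, αk−2)·xᵏ`, counting EE-paths in `L_{β/α}(k)`.
We write the lower index as `βk = ((α+β)k−2) − (αk−2)`, which equals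
`C((α+β)k−2, αk−2)` by the symmetry of binomial coefficients and correctly
implements the convention `C(n, −1) = 0` (needed when `αk = 1`), which ℕ-truncated
subtraction would not. -/
noncomputable def geeSer (α β : ℕ) : PowerSeries ℚ :=
  PowerSeries.mk fun k => if k = 0 then 0 else ((((α + β) * k - 2).choose (β * k) : ℕ) : ℚ)

/-- `g_en(x) = Σ_{k≥1} C((α+β)k−2, αk−1)·xᵏ`, counting EN-paths in `L_{β/α}(k)`. -/
noncomputable def genSer (α β : ℕ) : PowerSeries ℚ :=
  PowerSeries.mk fun k => if k = 0 then 0 else ((((α + β) * k - 2).choose (α * k - 1) : ℕ) : ℚ)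

/-- `g_nn(x) = Σ_{k≥1} C((α+β)k−2, αk)·xᵏ`, counting NN-paths in `L_{β/α}(k)`. -/
noncomputable def gnnSer (α β : ℕ) : PowerSeries ℚ :=
  PowerSeries.mk fun k => if k = 0 then 0 else ((((α + β) * k - 2).choose (α * k) : ℕ) : ℚ)

/-- `f_ee(x)`: generating function of bounce-free EE-paths in `L_{β/α}(k)`. -/
noncomputable def feeSer (α β : ℕ) : PowerSeries ℚ :=
  gfOf fun k => {p | InL α β k p ∧ BounceFree α β p ∧ FirstStep p true ∧ LastStep p true}

/-- `f_en(x)`: generating function of bounce-free EN-paths in `L_{β/α}(k)`. -/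
noncomputable def fenSer (α β : ℕ) : PowerSeries ℚ :=
  gfOf fun k => {p | InL α β k p ∧ BounceFree α β p ∧ FirstStep p true ∧ LastStep p false}

/-- `f_nn(x)`: generating function of bounce-free NN-paths in `L_{β/α}(k)`. -/
noncomputable def fnnSer (α β : ℕ) : PowerSeries ℚ :=
  gfOf fun k => {p | InL α β k p ∧ BounceFree α β p ∧ FirstStep p false ∧ LastStep p false}

/-- `f(x)`: generating function of all bounce-free paths in `L_{β/α}(k)`. -/
noncomputable def fSer (α β : ℕ) : PowerSeries ℚ :=
  gfOf fun k => {p | InL α β k p ∧ BounceFree α β p}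

/-- `B_{ℓ,r}(x)`: generating function of paths in `L_{β/α}(k)` with exactly `ℓ`
left bounces and exactly `r` right bounces. -/
noncomputable def BSer (α β ℓ r : ℕ) : PowerSeries ℚ :=
  gfOf fun k => {p | InL α β k p ∧ leftBounces α β p = ℓ ∧ rightBounces α β p = r}

/-- The Fuss–Catalan generating function `c_α(x) = Σ_{k≥0} 1/(αk+1)·C((α+1)k, k)·xᵏ`. -/
noncomputable def fussCatalan (α : ℕ) : PowerSeries ℚ :=
  PowerSeries.mk fun k => (1 / ((α * k + 1 : ℕ) : ℚ)) * ((((α + 1) * k).choose k : ℕ) : ℚ)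

/-- For slope `1/α`: `p` has a horizontal cross at the lattice point `(α*i, i)` (`i ≥ 1`):
`p` passes through `(α*i, i)` (so the prefix of length `(α+1)*i` has exactly `α*i`
E-steps), and both the step ending there and the step starting there are E-steps. -/
def HasHCrossAt (α : ℕ) (p : LatticePath) (i : ℕ) : Prop :=
  1 ≤ i ∧ (p.take ((α + 1) * i)).count true = α * i ∧
    p[(α + 1) * i - 1]? = some true ∧ p[(α + 1) * i]? = some true

/-- `p` has no horizontal crosses with respect to the line `y = x/α`. -/
def NoHCross (α : ℕ) (p : LatticePath) : Prop := ∀ i, ¬ HasHCrossAt α p i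

/-!
Measure the height of a path by `#E − α·#N`. Paths in `L_{1/α}(k)` then return to height `0`,
and a path is bounce-free exactly when the two steps around each interior return to height `0`
agree.

Split the bounce-free `EE`-paths according to the step leaving their last return to the line.
If it is an `N`-step, rotating the path to start there gives a bounce-free `NN`-path, and
rotating an `NN`-path at its first return undoes this. If it is an `E`-step, the path stays
above the line up to a last point `j` at some height `v ∈ {1, …, α - 1}`, where an `N`-step
takes it below the line for good. Deleting that step, reversing the remaining tail and
appending an `N`-step gives a bounce-free `EN`-path whose last visit to height `v` is at `j`,
so the pair `(v, EN-path)` determines the original path.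
-/

namespace LatticePath

variable {α : ℕ}

/-- The line `y = x/α` is the level `0` of this height. -/
def height (α : ℕ) (p : LatticePath) : ℤ := p.count true - α * p.count false

def heightAt (α : ℕ) (p : LatticePath) (t : ℕ) : ℤ := height α (p.take t)

@[simp] lemma height_nil : height α [] = 0 := by simp [height]

@[simp] lemma height_append (x y : LatticePath) :
    height α (x ++ y) = height α x + height α y := by
  simp only [height, List.count_append]; push_cast; ring

@[simp] lemma height_reverse (x : LatticePath) : height α x.reverse = height α x := by
  simp [height]

@[simp] lemma height_singleton (b : Bool) : height α [b] = if b then 1 else -(α : ℤ) := by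
  cases b <;> simp [height]

lemma height_perm {p q : LatticePath} (h : p.Perm q) : height α p = height α q := by
  simp [height, h.count_eq]

lemma height_eq_zero_of_inL {k : ℕ} {p : LatticePath} (h : InL α 1 k p) : height α p = 0 := by
  simp [height, h.1, h.2]

lemma inL_of_perm {β k : ℕ} {p q : LatticePath} (h : p.Perm q) (hq : InL α β k q) :
    InL α β k p := by
  simpa [InL, h.count_eq] using hq

@[simp] lemma heightAt_zero (p : LatticePath) : heightAt α p 0 = 0 := by simp [heightAt]

lemma heightAt_of_length_le {p : LatticePath} {t : ℕ} (h : p.length ≤ t) :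
    heightAt α p t = height α p := by
  rw [heightAt, List.take_of_length_le h]

@[simp] lemma heightAt_length (p : LatticePath) : heightAt α p p.length = height α p :=
  heightAt_of_length_le le_rfl

lemma heightAt_take (p : LatticePath) {s t : ℕ} (h : s ≤ t) :
    heightAt α (p.take t) s = heightAt α p s := by
  rw [heightAt, heightAt, List.take_take, Nat.min_eq_left h]

lemma heightAt_congr_take {p q : LatticePath} {m s : ℕ} (h : p.take m = q.take m)
    (hs : s ≤ m) : heightAt α p s = heightAt α q s := by
  rw [← heightAt_take p hs, h, heightAt_take q hs]

lemma heightAt_append_of_le {x : LatticePath} (y : LatticePath) {t : ℕ} (h : t ≤ x.length) :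
    heightAt α (x ++ y) t = heightAt α x t := by
  simp [heightAt, List.take_append, Nat.sub_eq_zero_of_le h]

lemma heightAt_append_length_add (x y : LatticePath) (s : ℕ) :
    heightAt α (x ++ y) (x.length + s) = height α x + heightAt α y s := by
  simp [heightAt, List.take_append, List.take_of_length_le (Nat.le_add_right x.length s)]

lemma heightAt_drop (p : LatticePath) (z s : ℕ) :
    heightAt α (p.drop z) s = heightAt α p (z + s) - heightAt α p z := by
  rcases le_or_gt z p.length with hz | hz
  · have h := heightAt_append_length_add (α := α) (p.take z) (p.drop z) s
    rw [List.take_append_drop, List.length_take, Nat.min_eq_left hz] at h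
    rw [h]; simp only [heightAt]; ring
  · rw [heightAt_of_length_le hz.le, heightAt_of_length_le (show p.length ≤ z + s by omega),
      List.drop_of_length_le hz.le]
    simp [heightAt]

lemma height_drop (p : LatticePath) (m : ℕ) :
    height α (p.drop m) = height α p - heightAt α p m := by
  have := congrArg (height α) (List.take_append_drop m p)
  rw [height_append] at this
  rw [heightAt]; linarith

lemma heightAt_reverse (p : LatticePath) {s : ℕ} (h : s ≤ p.length) :
    heightAt α p.reverse s = height α p - heightAt α p (p.length - s) := by
  have hdrop := heightAt_drop (α := α) p (p.length - s) s
  rw [Nat.sub_add_cancel h, heightAt_length, heightAt_of_length_le (by simp; omega)] at hdrop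
  rw [heightAt, List.take_reverse, height_reverse, hdrop]

lemma heightAt_succ {p : LatticePath} {t : ℕ} {b : Bool} (h : p[t]? = some b) :
    heightAt α p (t + 1) = heightAt α p t + if b then 1 else -(α : ℤ) := by
  simp [heightAt, List.take_add_one, h]

lemma heightAt_succ_cases {p : LatticePath} {t : ℕ} (h : t < p.length) :
    p[t]? = some true ∧ heightAt α p (t + 1) = heightAt α p t + 1 ∨
      p[t]? = some false ∧ heightAt α p (t + 1) = heightAt α p t - α := by
  have ht := List.getElem?_eq_getElem h
  cases hb : p[t] <;> rw [hb] at ht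
  · exact Or.inr ⟨ht, by rw [heightAt_succ ht]; simp; ring⟩
  · exact Or.inl ⟨ht, by rw [heightAt_succ ht]; simp⟩

lemma heightAt_succ_le (p : LatticePath) (t : ℕ) :
    heightAt α p (t + 1) ≤ heightAt α p t + 1 := by
  rcases lt_or_ge t p.length with h | h
  · rcases heightAt_succ_cases (α := α) h with ⟨-, h'⟩ | ⟨-, h'⟩ <;> omega
  · rw [heightAt_of_length_le h, heightAt_of_length_le (by omega)]; omega

lemma exists_heightAt_eq (p : LatticePath) {a b : ℕ} {v : ℤ} (hab : a ≤ b)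
    (ha : heightAt α p a < v) (hb : v ≤ heightAt α p b) :
    ∃ t, a < t ∧ t ≤ b ∧ heightAt α p t = v := by
  induction b, hab using Nat.le_induction with
  | base => omega
  | succ n hn ih =>
    by_cases h : v ≤ heightAt α p n
    · obtain ⟨t, h1, h2, h3⟩ := ih h
      exact ⟨t, h1, by omega, h3⟩
    · exact ⟨n + 1, by omega, le_rfl, by have := heightAt_succ_le (α := α) p n; omega⟩

lemma heightAt_one {p : LatticePath} {b : Bool} (h : p.head? = some b) :
    heightAt α p 1 = if b then 1 else -(α : ℤ) := by
  rw [List.head?_eq_getElem?] at h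
  simpa using heightAt_succ (α := α) h

lemma heightAt_length_sub_one {p : LatticePath} {b : Bool} (h : p.getLast? = some b) :
    heightAt α p (p.length - 1) = height α p - if b then 1 else -(α : ℤ) := by
  rw [List.getLast?_eq_getElem?] at h
  have hn : p.length - 1 + 1 = p.length := by
    have := (List.getElem?_eq_some_iff.1 h).1; omega
  have := heightAt_succ (α := α) h
  rw [hn, heightAt_length] at this
  omega

def Straight (α : ℕ) (p : LatticePath) : Prop :=
  ∀ i, i + 1 < p.length → heightAt α p (i + 1) = 0 → p[i]? = p[i + 1]?

lemma bounceFree_one_iff_straight {p : LatticePath} : BounceFree α 1 p ↔ Straight α p := by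
  have hline : ∀ t, α * (p.take t).count false = 1 * (p.take t).count true ↔
      heightAt α p t = 0 := fun t => by simp only [heightAt, height]; omega
  constructor
  · rintro ⟨hL, hR⟩ i hi h0
    rw [List.getElem?_eq_getElem (by omega), List.getElem?_eq_getElem hi]
    cases hb1 : p[i] <;> cases hb2 : p[i + 1]
    · rfl
    · exact absurd ⟨by rw [List.getElem?_eq_getElem (by omega), hb1],
        by rw [List.getElem?_eq_getElem hi, hb2], (hline _).2 h0⟩ (hR i)
    · exact absurd ⟨by rw [List.getElem?_eq_getElem (by omega), hb1],
        by rw [List.getElem?_eq_getElem hi, hb2], (hline _).2 h0⟩ (hL i)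
    · rfl
  · refine fun hs => ⟨fun i ⟨h1, h2, h3⟩ => ?_, fun i ⟨h1, h2, h3⟩ => ?_⟩ <;>
    · have := hs i (List.getElem?_eq_some_iff.1 h2).1 ((hline _).1 h3)
      simp [h1, h2] at this

lemma Straight.getElem?_pred_eq {p : LatticePath} (hs : Straight α p) {z : ℕ} (hz : 0 < z)
    (hzn : z < p.length) (h0 : heightAt α p z = 0) : p[z - 1]? = p[z]? := by
  obtain ⟨i, rfl⟩ : ∃ i, z = i + 1 := ⟨z - 1, by omega⟩
  exact hs i hzn h0

lemma straight_append_iff {x y : LatticePath} (hx : height α x = 0) (hx0 : x ≠ [])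
    (hy0 : y ≠ []) :
    Straight α (x ++ y) ↔ Straight α x ∧ x.getLast? = y.head? ∧ Straight α y := by
  have hxl : 0 < x.length := List.length_pos_iff.2 hx0
  have hyl : 0 < y.length := List.length_pos_iff.2 hy0
  have hright : ∀ i, heightAt α (x ++ y) (x.length + i) = heightAt α y i := fun i => by
    rw [heightAt_append_length_add, hx, zero_add]
  have hjunc : (x ++ y)[x.length - 1]? = x.getLast? ∧ (x ++ y)[x.length - 1 + 1]? = y.head? := by
    rw [List.getLast?_eq_getElem?, List.head?_eq_getElem?, Nat.sub_add_cancel hxl,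
      List.getElem?_append_left (by omega), List.getElem?_append_right le_rfl, Nat.sub_self]
    exact ⟨rfl, rfl⟩
  constructor
  · intro h
    refine ⟨fun i hi h0 => ?_, ?_, fun i hi h0 => ?_⟩
    · have := h i (by simp; omega) (by rwa [heightAt_append_of_le _ hi.le])
      rwa [List.getElem?_append_left (by omega), List.getElem?_append_left hi] at this
    · rw [← hjunc.1, ← hjunc.2]
      exact h _ (by simp; omega) (by rw [Nat.sub_add_cancel hxl, heightAt_append_of_le _ le_rfl,
        heightAt_length, hx])
    · have := h (x.length + i) (by simp; omega) (by rwa [add_assoc, hright])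
      rwa [List.getElem?_append_right (by omega), List.getElem?_append_right (by omega),
        Nat.add_sub_cancel_left, add_assoc, Nat.add_sub_cancel_left] at this
  · rintro ⟨hsx, hxy, hsy⟩ i hi h0
    simp only [List.length_append] at hi
    rcases lt_trichotomy (i + 1) x.length with hc | hc | hc
    · rw [heightAt_append_of_le _ hc.le] at h0
      rw [List.getElem?_append_left (by omega), List.getElem?_append_left hc]
      exact hsx i hc h0
    · obtain rfl : i = x.length - 1 := by omega
      rw [hjunc.1, hjunc.2, hxy]
    · obtain ⟨j, rfl⟩ : ∃ j, i = x.length + j := ⟨i - x.length, by omega⟩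
      rw [add_assoc, hright] at h0
      rw [List.getElem?_append_right (by omega), List.getElem?_append_right (by omega),
        Nat.add_sub_cancel_left, add_assoc, Nat.add_sub_cancel_left]
      exact hsy j (by omega) h0

lemma Straight.append_comm {x y : LatticePath} (h : Straight α (x ++ y))
    (hx : height α x = 0) (hy : height α y = 0) (hyx : y.getLast? = x.head?) :
    Straight α (y ++ x) := by
  rcases eq_or_ne x [] with rfl | hx0
  · simpa using h
  have hy0 : y ≠ [] := by
    rintro rfl
    exact hx0 (List.head?_eq_none_iff.1 hyx.symm)
  obtain ⟨hsx, -, hsy⟩ := (straight_append_iff hx hx0 hy0).1 h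
  exact (straight_append_iff hy hy0 hx0).2 ⟨hsy, hyx, hsx⟩

lemma Straight.rotate {p : LatticePath} (hs : Straight α p) (hp : height α p = 0) {m : ℕ}
    (hm0 : 0 < m) (hmn : m < p.length) (hm : heightAt α p m = 0)
    (hends : p.getLast? = p.head?) : Straight α (p.rotate m) := by
  rw [List.rotate_eq_drop_append_take hmn.le]
  refine Straight.append_comm (by rwa [List.take_append_drop]) hm
    (by rw [height_drop, hp, hm, sub_zero]) ?_
  rw [List.getLast?_drop, List.head?_take, if_neg (by omega), if_neg (by omega), hends]

lemma Straight.of_take_eq {p q : LatticePath} (hs : Straight α p) {m : ℕ}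
    (htake : p.take m = q.take m)
    (hq : ∀ s, m ≤ s → s < q.length → heightAt α q s ≠ 0) : Straight α q := by
  intro i hi h0
  have him : i + 1 < m := by
    by_contra! h
    exact hq (i + 1) h hi h0
  have hagree : ∀ s < m, p[s]? = q[s]? := fun s hs => by
    rw [← List.getElem?_take_of_lt hs, htake, List.getElem?_take_of_lt hs]
  have hip : i + 1 < p.length := by
    by_contra! h
    have := hagree (i + 1) him
    rw [List.getElem?_eq_none h, List.getElem?_eq_getElem hi] at this
    cases this
  rw [← hagree i (by omega), ← hagree (i + 1) him]
  exact hs i hip (by rwa [heightAt_congr_take htake him.le])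

section LastIndex

open scoped Classical

noncomputable def lastIndex (α : ℕ) (S : Set ℤ) (p : LatticePath) : ℕ :=
  Nat.findGreatest (fun t => heightAt α p t ∈ S) (p.length - 1)

variable {S : Set ℤ} {p : LatticePath}

lemma lastIndex_le : lastIndex α S p ≤ p.length - 1 := Nat.findGreatest_le _

lemma heightAt_lastIndex_mem {m : ℕ} (hm : m ≤ p.length - 1) (h : heightAt α p m ∈ S) :
    heightAt α p (lastIndex α S p) ∈ S :=
  Nat.findGreatest_spec (P := fun t => heightAt α p t ∈ S) hm h

lemma heightAt_notMem_of_lastIndex_lt {t : ℕ} (h : lastIndex α S p < t)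
    (ht : t ≤ p.length - 1) : heightAt α p t ∉ S :=
  Nat.findGreatest_is_greatest h ht

lemma lastIndex_eq {m : ℕ} (hm : m ≤ p.length - 1) (h : heightAt α p m ∈ S)
    (hgt : ∀ t, m < t → t ≤ p.length - 1 → heightAt α p t ∉ S) : lastIndex α S p = m :=
  Nat.findGreatest_eq_iff.2 ⟨hm, fun _ => h, fun t ht ht' => hgt t ht ht'⟩

lemma heightAt_lastIndex_zero : heightAt α p (lastIndex α {0} p) = 0 :=
  heightAt_lastIndex_mem (S := {0}) (m := 0) (Nat.zero_le _) (by simp)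

end LastIndex

/-- `0` if `p` never returns to the line. -/
noncomputable def firstZero (α : ℕ) (p : LatticePath) : ℕ :=
  sInf {t | 0 < t ∧ heightAt α p t = 0}

lemma firstZero_spec {p : LatticePath} {m : ℕ} (hm0 : 0 < m) (hm : heightAt α p m = 0) :
    0 < firstZero α p ∧ firstZero α p ≤ m ∧ heightAt α p (firstZero α p) = 0 ∧
      ∀ t, 0 < t → t < firstZero α p → heightAt α p t ≠ 0 :=
  have hmem : m ∈ {t | 0 < t ∧ heightAt α p t = 0} := ⟨hm0, hm⟩
  ⟨(Nat.sInf_mem ⟨m, hmem⟩).1, Nat.sInf_le hmem, (Nat.sInf_mem ⟨m, hmem⟩).2,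
    fun _ ht0 ht h0 => Nat.notMem_of_lt_sInf ht ⟨ht0, h0⟩⟩

lemma firstZero_eq {p : LatticePath} {m : ℕ} (hm0 : 0 < m) (hm : heightAt α p m = 0)
    (hlt : ∀ t, 0 < t → t < m → heightAt α p t ≠ 0) : firstZero α p = m := by
  obtain ⟨h0, hle, hz, -⟩ := firstZero_spec hm0 hm
  by_contra hne
  exact hlt _ h0 (by omega) hz

def IsPrimitive (α : ℕ) (b : LatticePath) : Prop :=
  b ≠ [] ∧ height α b = 0 ∧ ∀ t, 0 < t → t < b.length → heightAt α b t ≠ 0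

lemma firstZero_append {b : LatticePath} (hb : IsPrimitive α b) (a : LatticePath) :
    firstZero α (b ++ a) = b.length := by
  obtain ⟨hb0, hbh, hbt⟩ := hb
  refine firstZero_eq (List.length_pos_iff.2 hb0) ?_ fun t ht0 ht => ?_
  · rw [heightAt_append_of_le _ le_rfl, heightAt_length, hbh]
  · rw [heightAt_append_of_le _ ht.le]
    exact hbt t ht0 ht

lemma lastIndex_zero_append {a b : LatticePath} (ha : height α a = 0) (hb : IsPrimitive α b) :
    lastIndex α {0} (a ++ b) = a.length := by
  obtain ⟨hb0, -, hbt⟩ := hb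
  have hbl := List.length_pos_iff.2 hb0
  refine lastIndex_eq (by simp; omega) ?_ fun t ht ht' => ?_
  · rw [heightAt_append_of_le _ le_rfl, heightAt_length, ha]; rfl
  · obtain ⟨s, rfl⟩ : ∃ s, t = a.length + s := ⟨t - a.length, by omega⟩
    rw [heightAt_append_length_add, ha, zero_add]
    exact hbt s (by omega) (by simp at ht'; omega)

lemma isPrimitive_drop_lastIndex_zero {p : LatticePath} (hp : height α p = 0)
    (hp0 : p ≠ []) : IsPrimitive α (p.drop (lastIndex α {0} p)) := by
  have hle : lastIndex α {0} p ≤ p.length - 1 := lastIndex_le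
  have hpl := List.length_pos_iff.2 hp0
  refine ⟨by simp; omega, by rw [height_drop, hp, heightAt_lastIndex_zero, sub_zero],
    fun t ht0 ht => ?_⟩
  rw [heightAt_drop, heightAt_lastIndex_zero, sub_zero]
  simpa using heightAt_notMem_of_lastIndex_lt (α := α) (S := {0}) (p := p)
    (t := lastIndex α {0} p + t) (by omega) (by simp at ht; omega)

lemma isPrimitive_take_firstZero {p : LatticePath} {m : ℕ} (hm0 : 0 < m)
    (hmn : m ≤ p.length) (hm : heightAt α p m = 0) :
    IsPrimitive α (p.take (firstZero α p)) := by
  obtain ⟨h0, hle, hz, hlt⟩ := firstZero_spec hm0 hm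
  refine ⟨List.ne_nil_of_length_pos (by simp; omega), hz, fun t ht0 ht => ?_⟩
  rw [heightAt_take _ (by simp at ht; omega)]
  exact hlt t ht0 (by simp at ht; omega)

lemma rotate_rotate_length_sub (l : LatticePath) {m : ℕ} (h : m ≤ l.length) :
    (l.rotate m).rotate (l.length - m) = l := by
  rw [List.rotate_rotate, Nat.add_sub_cancel' h, List.rotate_length]

lemma rotate_lastIndex_zero {p : LatticePath} (hp : height α p = 0) (hs : Straight α p)
    (hhead : p.head? = some true) (hlast : p.getLast? = some true)
    (hz : p[lastIndex α {0} p]? = some false) :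
    Straight α (p.rotate (lastIndex α {0} p)) ∧
      (p.rotate (lastIndex α {0} p)).head? = some false ∧
      (p.rotate (lastIndex α {0} p)).getLast? = some false ∧
      (p.rotate (lastIndex α {0} p)).rotate
        (firstZero α (p.rotate (lastIndex α {0} p))) = p := by
  set z := lastIndex α {0} p
  have hzn : z < p.length := (List.getElem?_eq_some_iff.1 hz).1
  have hz0 : 0 < z := by
    rcases Nat.eq_zero_or_pos z with h | h
    · rw [h, ← List.head?_eq_getElem?, hhead] at hz; cases hz
    · exact h
  have hH : heightAt α p z = 0 := heightAt_lastIndex_zero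
  have hrot : p.rotate z = p.drop z ++ p.take z := List.rotate_eq_drop_append_take hzn.le
  refine ⟨hs.rotate hp hz0 hzn hH (hlast.trans hhead.symm), ?_, ?_, ?_⟩
  · rw [List.head?_rotate hzn, hz]
  · rw [hrot, List.getLast?_append, List.getLast?_take, if_neg hz0.ne',
      hs.getElem?_pred_eq hz0 hzn hH, hz]
    rfl
  · rw [hrot, firstZero_append (isPrimitive_drop_lastIndex_zero hp (by rintro rfl; cases hhead)),
      ← hrot, List.length_drop, rotate_rotate_length_sub _ hzn.le]

lemma firstZero_spec_of_head_false (hα : 1 ≤ α) {q : LatticePath} (hq : height α q = 0)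
    (hhead : q.head? = some false) (hlast : q.getLast? = some false) :
    2 ≤ firstZero α q ∧ firstZero α q < q.length ∧ heightAt α q (firstZero α q) = 0 ∧
      q[firstZero α q - 1]? = some true ∧ IsPrimitive α (q.take (firstZero α q)) := by
  have h1 : heightAt α q 1 = -α := by simpa using heightAt_one (α := α) hhead
  have hn1 : heightAt α q (q.length - 1) = α := by
    simpa [hq] using heightAt_length_sub_one (α := α) hlast
  have hn : 2 ≤ q.length := by
    have : q.length ≠ 0 := by rintro h; simp [List.length_eq_zero_iff.1 h] at hhead
    by_contra! h
    rw [show q.length - 1 = 0 by omega, heightAt_zero] at hn1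
    omega
  obtain ⟨m, hm1, hmn, hm⟩ := exists_heightAt_eq (α := α) q (a := 1) (b := q.length - 1)
    (v := 0) (by omega) (by omega) (by omega)
  obtain ⟨hz0, hzm, hz, hlt⟩ := firstZero_spec (by omega : 0 < m) hm
  have hz2 : 2 ≤ firstZero α q := by
    by_contra! h
    rw [show firstZero α q = 1 by omega] at hz
    omega
  refine ⟨hz2, by omega, hz, ?_, isPrimitive_take_firstZero (by omega) (by omega) hm⟩
  rcases heightAt_succ_cases (α := α) (p := q) (t := firstZero α q - 1) (by omega)
    with ⟨h, -⟩ | ⟨-, h⟩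
  · exact h
  · rw [Nat.sub_add_cancel (by omega), hz] at h
    obtain ⟨t, ht1, ht2, ht⟩ := exists_heightAt_eq (α := α) q (a := 1)
      (b := firstZero α q - 1) (v := 0) (by omega) (by omega) (by omega)
    exact absurd ht (hlt t (by omega) (by omega))

lemma rotate_firstZero (hα : 1 ≤ α) {q : LatticePath} (hq : height α q = 0)
    (hs : Straight α q) (hhead : q.head? = some false) (hlast : q.getLast? = some false) :
    Straight α (q.rotate (firstZero α q)) ∧
      (q.rotate (firstZero α q)).head? = some true ∧
      (q.rotate (firstZero α q)).getLast? = some true ∧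
      (q.rotate (firstZero α q))[lastIndex α {0} (q.rotate (firstZero α q))]? = some false ∧
      (q.rotate (firstZero α q)).rotate (lastIndex α {0} (q.rotate (firstZero α q))) = q := by
  obtain ⟨hz2, hzn, hz, hstep, hprim⟩ := firstZero_spec_of_head_false hα hq hhead hlast
  set z := firstZero α q
  have hqz : q[z]? = some true := (hs.getElem?_pred_eq (by omega) hzn hz).symm.trans hstep
  have hrot : q.rotate z = q.drop z ++ q.take z := List.rotate_eq_drop_append_take hzn.le
  have hlast0 : lastIndex α {0} (q.rotate z) = q.length - z := by
    rw [hrot, lastIndex_zero_append (by rw [height_drop, hq, hz, sub_zero]) hprim,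
      List.length_drop]
  refine ⟨hs.rotate hq (by omega) hzn hz (hlast.trans hhead.symm), ?_, ?_, ?_, ?_⟩
  · rw [List.head?_rotate hzn, hqz]
  · rw [hrot, List.getLast?_append, List.getLast?_take, if_neg (by omega), hstep]
    rfl
  · rw [hlast0, List.getElem?_rotate (by omega), Nat.sub_add_cancel hzn.le, Nat.mod_self,
      ← List.head?_eq_getElem?, hhead]
  · rw [hlast0, rotate_rotate_length_sub _ hzn.le]

lemma take_append_cons_drop {p : LatticePath} {j : ℕ} {b : Bool} (h : p[j]? = some b) :
    p.take j ++ b :: p.drop (j + 1) = p := by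
  obtain ⟨hj, rfl⟩ := List.getElem?_eq_some_iff.1 h
  rw [← List.drop_eq_getElem_cons hj, List.take_append_drop]

/-- Delete the `N`-step at index `j`, give the rest of the path a half-turn (reverse its
steps) and close with an `N`-step. -/
def flipTail (j : ℕ) (p : LatticePath) : LatticePath :=
  p.take j ++ ((p.drop (j + 1)).reverse ++ [false])

def unflipTail (t : ℕ) (q : LatticePath) : LatticePath :=
  q.take t ++ false :: ((q.drop t).dropLast).reverse

lemma unflipTail_flipTail {p : LatticePath} {j : ℕ} (h : p[j]? = some false) :
    unflipTail j (flipTail j p) = p := by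
  have hlen : (p.take j).length = j := by
    have := (List.getElem?_eq_some_iff.1 h).1; simp; omega
  rw [unflipTail, flipTail, List.take_left' hlen, List.drop_left' hlen, List.dropLast_concat,
    List.reverse_reverse, take_append_cons_drop h]

lemma flipTail_unflipTail {q : LatticePath} {t : ℕ} (ht : t < q.length)
    (h : q.getLast? = some false) : flipTail t (unflipTail t q) = q := by
  have hlen : (q.take t).length = t := by simp; omega
  have hlast : (q.drop t).dropLast ++ [false] = q.drop t :=
    List.dropLast_append_getLast? false (by rw [List.getLast?_drop, if_neg (by omega), h]; rfl)
  have hu : unflipTail t q = (q.take t ++ [false]) ++ ((q.drop t).dropLast).reverse := by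
    simp [unflipTail]
  rw [flipTail, hu, List.drop_left' (by simp [hlen]), List.reverse_reverse,
    List.take_append_of_le_length (by simp [hlen]), List.take_left' hlen, hlast,
    List.take_append_drop]

lemma getElem?_unflipTail {q : LatticePath} {t : ℕ} (ht : t ≤ q.length) :
    (unflipTail t q)[t]? = some false := by
  have hlen : (q.take t).length = t := by simp; omega
  rw [unflipTail, List.getElem?_append_right hlen.le, hlen, Nat.sub_self]
  rfl

lemma flipTail_perm {p : LatticePath} {j : ℕ} (h : p[j]? = some false) :
    (flipTail j p).Perm p := by
  conv_rhs => rw [← take_append_cons_drop h]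
  exact ((List.perm_append_singleton _ _).trans ((List.reverse_perm _).cons _)).append_left _

lemma unflipTail_perm {q : LatticePath} {t : ℕ} (ht : t < q.length)
    (h : q.getLast? = some false) : (unflipTail t q).Perm q := by
  simpa [flipTail_unflipTail ht h] using (flipTail_perm (getElem?_unflipTail ht.le)).symm

lemma take_flipTail {p : LatticePath} {j : ℕ} (h : j ≤ p.length) :
    (flipTail j p).take j = p.take j :=
  List.take_left' (by simp; omega)

lemma take_unflipTail {q : LatticePath} {t : ℕ} (h : t ≤ q.length) :
    (unflipTail t q).take t = q.take t :=
  List.take_left' (by simp; omega)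

lemma getLast?_unflipTail {q : LatticePath} {t : ℕ} (h : t + 1 < q.length) :
    (unflipTail t q).getLast? = q[t]? := by
  rw [unflipTail, List.getLast?_append, List.getLast?_cons, List.getLast?_reverse,
    List.head?_dropLast, if_pos (by simp; omega), List.head?_drop]
  simp [List.getElem?_eq_getElem (show t < q.length by omega)]

lemma heightAt_flipTail {p : LatticePath} {j : ℕ} (h : p[j]? = some false) {s : ℕ}
    (hs : s ≤ p.length - j - 1) :
    heightAt α (flipTail j p) (j + s) =
      heightAt α p j + height α p - heightAt α p (p.length - s) := by
  have hj := (List.getElem?_eq_some_iff.1 h).1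
  have hlen : (p.take j).length = j := by simp; omega
  have happ := heightAt_append_length_add (α := α) (p.take j)
    ((p.drop (j + 1)).reverse ++ [false]) s
  rw [hlen] at happ
  rw [flipTail, happ, heightAt_append_of_le _ (by simp; omega), heightAt_reverse _ (by simp; omega),
    height_drop, heightAt_drop, List.length_drop,
    show j + 1 + (p.length - (j + 1) - s) = p.length - s by omega]
  simp only [heightAt]
  ring

lemma heightAt_unflipTail {q : LatticePath} {t : ℕ} (ht : t < q.length)
    (h : q.getLast? = some false) {u : ℕ} (htu : t < u) (hu : u ≤ q.length) :
    heightAt α (unflipTail t q) u =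
      heightAt α q t + height α q - heightAt α q (t + q.length - u) := by
  have hperm := unflipTail_perm ht h
  have hflip := heightAt_flipTail (α := α) (getElem?_unflipTail ht.le) (s := q.length - u)
    (by rw [hperm.length_eq]; omega)
  rw [flipTail_unflipTail ht h, hperm.length_eq, height_perm hperm,
    heightAt_congr_take (take_unflipTail ht.le) le_rfl,
    show q.length - (q.length - u) = u by omega] at hflip
  rw [show t + q.length - u = t + (q.length - u) by omega]
  linarith

lemma lastIndex_zero_eq_of_take_eq {p q : LatticePath} {m : ℕ} (htake : p.take m = q.take m)
    (hlen : p.length = q.length) (hp : ∀ s, m ≤ s → s < p.length → heightAt α p s ≠ 0)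
    (hq : ∀ s, m ≤ s → s < q.length → heightAt α q s ≠ 0) :
    lastIndex α {0} p = lastIndex α {0} q := by
  have hz : heightAt α q (lastIndex α {0} q) = 0 := heightAt_lastIndex_zero
  have hzn : lastIndex α {0} q ≤ q.length - 1 := lastIndex_le
  rcases lt_or_ge (lastIndex α {0} q) m with hzm | hzm
  · refine lastIndex_eq (by omega) (by rw [heightAt_congr_take htake hzm.le]; exact hz)
      fun s h1 h2 => ?_
    rcases lt_or_ge s m with hsm | hsm
    · rw [heightAt_congr_take htake hsm.le]
      exact heightAt_notMem_of_lastIndex_lt h1 (by omega)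
    · exact hp s hsm (by omega)
  · have hq0 : q.length = 0 := by
      by_contra h
      exact hq _ hzm (by omega) hz
    have := lastIndex_le (α := α) (S := {0}) (p := p)
    omega

lemma getElem?_lastIndex_zero_eq_true {q : LatticePath} {t : ℕ} (ht : lastIndex α {0} q < t)
    (htn : t < q.length) (hpos : 0 < heightAt α q t) : q[lastIndex α {0} q]? = some true := by
  set z := lastIndex α {0} q
  have hnz : ∀ s, z < s → s < q.length → heightAt α q s ≠ 0 := fun s h1 h2 => by
    simpa using heightAt_notMem_of_lastIndex_lt (α := α) (S := {0}) h1 (by omega)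
  rcases heightAt_succ_cases (α := α) (p := q) (t := z) (by omega) with ⟨h, -⟩ | ⟨-, h⟩
  · exact h
  · rw [heightAt_lastIndex_zero] at h
    have h1 := hnz (z + 1) (by omega) (by omega)
    obtain ⟨s, hs1, hs2, hs⟩ := exists_heightAt_eq (α := α) q (a := z + 1) (b := t) (v := 0)
      (by omega) (by omega) hpos.le
    exact absurd hs (hnz s (by omega) (by omega))

lemma getElem?_lastIndex_zero_of_take_eq {p q : LatticePath} {t : ℕ}
    (htake : p.take t = q.take t) (hlen : p.length = q.length) (htn : t < q.length)
    (hp : ∀ s, t ≤ s → s < p.length → heightAt α p s ≠ 0)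
    (hq : ∀ s, t ≤ s → s < q.length → 0 < heightAt α q s) :
    p[lastIndex α {0} p]? = some true := by
  have hqnz : ∀ s, t ≤ s → s < q.length → heightAt α q s ≠ 0 := fun s h1 h2 =>
    (hq s h1 h2).ne'
  have hzt : lastIndex α {0} q < t := by
    by_contra! h
    exact hqnz _ h (by have : lastIndex α {0} q ≤ q.length - 1 := lastIndex_le; omega)
      heightAt_lastIndex_zero
  rw [lastIndex_zero_eq_of_take_eq htake hlen hp hqnz, ← List.getElem?_take_of_lt hzt, htake,
    List.getElem?_take_of_lt hzt]
  exact getElem?_lastIndex_zero_eq_true hzt htn (hq t le_rfl htn)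

lemma lastIndex_Ici_zero_spec {p : LatticePath} (hp : height α p = 0)
    (hlast : p.getLast? = some true) (hz : p[lastIndex α {0} p]? = some true) :
    0 < lastIndex α (Set.Ici 0) p ∧ p[lastIndex α (Set.Ici 0) p]? = some false ∧
      0 < heightAt α p (lastIndex α (Set.Ici 0) p) ∧
      heightAt α p (lastIndex α (Set.Ici 0) p) < α ∧
      ∀ t, lastIndex α (Set.Ici 0) p < t → t < p.length → heightAt α p t < 0 := by
  set z := lastIndex α {0} p
  set j := lastIndex α (Set.Ici 0) p
  have hn1 : heightAt α p (p.length - 1) = -1 := by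
    simpa [hp] using heightAt_length_sub_one (α := α) hlast
  have hzn : z < p.length := (List.getElem?_eq_some_iff.1 hz).1
  have hz1 : heightAt α p (z + 1) = 1 := by
    rw [heightAt_succ hz, heightAt_lastIndex_zero]; simp
  have hzn' : z + 1 < p.length := by
    by_contra! h
    rw [show z + 1 = p.length by omega, heightAt_length, hp] at hz1
    omega
  have hneg : ∀ t, j < t → t < p.length → heightAt α p t < 0 := fun t h1 h2 => by
    simpa using heightAt_notMem_of_lastIndex_lt (α := α) (S := Set.Ici 0) h1 (by omega)
  have hjz : z < j := by
    by_contra! h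
    have := hneg (z + 1) (by omega) hzn'
    omega
  have hj0 : 0 ≤ heightAt α p j :=
    heightAt_lastIndex_mem (S := Set.Ici 0) (m := 0) (Nat.zero_le _) (by simp)
  have hjn : j + 1 < p.length := by
    have : j ≤ p.length - 1 := lastIndex_le
    by_contra! h
    rw [show j = p.length - 1 by omega] at hj0
    omega
  have hv : heightAt α p j ≠ 0 := by
    simpa using heightAt_notMem_of_lastIndex_lt (α := α) (S := {0}) hjz (by omega)
  have hj1 := hneg (j + 1) (by omega) hjn
  rcases heightAt_succ_cases (α := α) (by omega : j < p.length) with ⟨-, h⟩ | ⟨hN, h⟩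
  · omega
  · exact ⟨by omega, hN, by omega, by omega, hneg⟩

lemma flipTail_spec {p : LatticePath} (hp : height α p = 0) (hs : Straight α p)
    (hhead : p.head? = some true) {j : ℕ} (hj0 : 0 < j) (hj : p[j]? = some false)
    (hv : 0 < heightAt α p j) (hneg : ∀ t, j < t → t < p.length → heightAt α p t < 0) :
    Straight α (flipTail j p) ∧ (flipTail j p).head? = some true ∧
      (flipTail j p).getLast? = some false ∧
      lastIndex α {heightAt α p j} (flipTail j p) = j := by
  have hjn := (List.getElem?_eq_some_iff.1 hj).1
  have hlen : (flipTail j p).length = p.length := (flipTail_perm hj).length_eq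
  have htake := take_flipTail hjn.le
  have hqj : heightAt α (flipTail j p) j = heightAt α p j := heightAt_congr_take htake le_rfl
  have hgt : ∀ t, j < t → t < p.length → heightAt α p j < heightAt α (flipTail j p) t :=
    fun t h1 h2 => by
      have := heightAt_flipTail (α := α) hj (s := t - j) (by omega)
      rw [Nat.add_sub_cancel' h1.le, hp, add_zero] at this
      have := hneg (p.length - (t - j)) (by omega) (by omega)
      omega
  refine ⟨hs.of_take_eq htake.symm fun s h1 h2 => ?_, ?_, by simp [flipTail],
    lastIndex_eq (by omega) (by simp [hqj]) fun t h1 h2 => ?_⟩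
  · rcases h1.eq_or_lt with rfl | h1
    · omega
    · have := hgt s h1 (by omega)
      omega
  · rw [flipTail, List.head?_append, List.head?_take, if_neg hj0.ne', hhead]
    rfl
  · have := hgt t h1 (by omega)
    simp only [Set.mem_singleton_iff]
    omega

lemma lastIndex_singleton_spec {q : LatticePath} (hq : height α q = 0)
    (hlast : q.getLast? = some false) {v : ℤ} (hv : 0 < v) (hvα : v < α) :
    0 < lastIndex α {v} q ∧ lastIndex α {v} q + 1 < q.length ∧
      heightAt α q (lastIndex α {v} q) = v ∧
      ∀ s, lastIndex α {v} q < s → s < q.length → v < heightAt α q s := by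
  set t := lastIndex α {v} q
  have hn1 : heightAt α q (q.length - 1) = α := by
    simpa [hq] using heightAt_length_sub_one (α := α) hlast
  obtain ⟨m, -, hmn, hm⟩ := exists_heightAt_eq (α := α) q (a := 0) (b := q.length - 1)
    (v := v) (Nat.zero_le _) (by simpa using hv) (by omega)
  have ht : heightAt α q t = v := by
    simpa using heightAt_lastIndex_mem (S := {v}) hmn (by simpa using hm)
  have hne : ∀ s, t < s → s ≤ q.length - 1 → heightAt α q s ≠ v := fun s h1 h2 => by
    simpa using heightAt_notMem_of_lastIndex_lt (α := α) (S := {v}) h1 h2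
  have htn : t ≤ q.length - 1 := lastIndex_le
  refine ⟨?_, ?_, ht, fun s h1 h2 => ?_⟩
  · by_contra! h
    rw [show t = 0 by omega, heightAt_zero] at ht
    omega
  · by_contra! h
    rw [show t = q.length - 1 by omega] at ht
    omega
  · by_contra! h
    obtain ⟨s', h1', h2', h'⟩ := exists_heightAt_eq (α := α) q (a := s) (b := q.length - 1)
      (v := v) (by omega) (lt_of_le_of_ne h (hne s h1 (by omega))) (by omega)
    exact hne s' (by omega) h2' h'

lemma unflipTail_spec {q : LatticePath} (hq : height α q = 0) (hs : Straight α q)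
    (hhead : q.head? = some true) (hlast : q.getLast? = some false) {t : ℕ} (ht0 : 0 < t)
    (htn : t + 1 < q.length) (hv : 0 < heightAt α q t)
    (hgt : ∀ s, t < s → s < q.length → heightAt α q t < heightAt α q s) :
    Straight α (unflipTail t q) ∧ (unflipTail t q).head? = some true ∧
      (unflipTail t q).getLast? = some true ∧
      (unflipTail t q)[lastIndex α {0} (unflipTail t q)]? = some true ∧
      lastIndex α (Set.Ici 0) (unflipTail t q) = t ∧
      heightAt α (unflipTail t q) t = heightAt α q t := by
  have hlen : (unflipTail t q).length = q.length := (unflipTail_perm (by omega) hlast).length_eq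
  have htake := take_unflipTail (by omega : t ≤ q.length)
  have hpt : heightAt α (unflipTail t q) t = heightAt α q t := heightAt_congr_take htake le_rfl
  have hneg : ∀ s, t < s → s < q.length → heightAt α (unflipTail t q) s < 0 :=
    fun s h1 h2 => by
      rw [heightAt_unflipTail (by omega) hlast h1 h2.le, hq, add_zero]
      have := hgt (t + q.length - s) (by omega) (by omega)
      omega
  have hnz : ∀ s, t ≤ s → s < (unflipTail t q).length →
      heightAt α (unflipTail t q) s ≠ 0 := fun s h1 h2 => by
    rcases h1.eq_or_lt with rfl | h1
    · omega
    · have := hneg s h1 (by omega)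
      omega
  have hqpos : ∀ s, t ≤ s → s < q.length → 0 < heightAt α q s := fun s h1 h2 => by
    rcases h1.eq_or_lt with rfl | h1
    · exact hv
    · have := hgt s h1 h2
      omega
  have hqt : q[t]? = some true := by
    rcases heightAt_succ_cases (α := α) (p := q) (t := t) (by omega) with ⟨h, -⟩ | ⟨-, h⟩
    · exact h
    · have := hgt (t + 1) (by omega) htn
      omega
  refine ⟨hs.of_take_eq htake.symm hnz, ?_, (getLast?_unflipTail htn).trans hqt,
    getElem?_lastIndex_zero_of_take_eq htake hlen (by omega) hnz hqpos,
    lastIndex_eq (by omega) (by simp [hpt]; omega) fun s h1 h2 => ?_, hpt⟩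
  · rw [unflipTail, List.head?_append, List.head?_take, if_neg ht0.ne', hhead]
    rfl
  · simpa using hneg s h1 (by omega)

section Counting

variable {k : ℕ}

def bounceFreePaths (α k : ℕ) (a b : Bool) : Set LatticePath :=
  {p | InL α 1 k p ∧ BounceFree α 1 p ∧ FirstStep p a ∧ LastStep p b}

lemma mem_bounceFreePaths {a b : Bool} {p : LatticePath} :
    p ∈ bounceFreePaths α k a b ↔
      InL α 1 k p ∧ Straight α p ∧ p.head? = some a ∧ p.getLast? = some b := by
  rw [bounceFreePaths, Set.mem_ofPred_eq, bounceFree_one_iff_straight]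
  rfl

lemma bounceFreePaths_finite (α k : ℕ) (a b : Bool) : (bounceFreePaths α k a b).Finite :=
  (List.finite_length_eq Bool (α * k + 1 * k)).subset fun p hp => by
    rw [Set.mem_ofPred_eq, ← List.count_true_add_count_false, hp.1.1, hp.1.2]

lemma ncard_bounceFreePaths_inter_rotate (hα : 1 ≤ α) :
    (bounceFreePaths α k true true ∩ {p | p[lastIndex α {0} p]? = some false}).ncard =
      (bounceFreePaths α k false false).ncard := by
  refine (Set.InvOn.bijOn (f := fun p => p.rotate (lastIndex α {0} p))
    (f' := fun q => q.rotate (firstZero α q)) ⟨?_, ?_⟩ ?_ ?_).ncard_eq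
  · rintro p ⟨hp, hz⟩
    obtain ⟨hL, hs, hh, hl⟩ := mem_bounceFreePaths.1 hp
    exact (rotate_lastIndex_zero (height_eq_zero_of_inL hL) hs hh hl hz).2.2.2
  · intro q hq
    obtain ⟨hL, hs, hh, hl⟩ := mem_bounceFreePaths.1 hq
    exact (rotate_firstZero hα (height_eq_zero_of_inL hL) hs hh hl).2.2.2.2
  · rintro p ⟨hp, hz⟩
    obtain ⟨hL, hs, hh, hl⟩ := mem_bounceFreePaths.1 hp
    obtain ⟨hs', hh', hl', -⟩ := rotate_lastIndex_zero (height_eq_zero_of_inL hL) hs hh hl hz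
    exact mem_bounceFreePaths.2 ⟨inL_of_perm (List.rotate_perm _ _) hL, hs', hh', hl'⟩
  · intro q hq
    obtain ⟨hL, hs, hh, hl⟩ := mem_bounceFreePaths.1 hq
    obtain ⟨hs', hh', hl', hz', -⟩ := rotate_firstZero hα (height_eq_zero_of_inL hL) hs hh hl
    exact ⟨mem_bounceFreePaths.2 ⟨inL_of_perm (List.rotate_perm _ _) hL, hs', hh', hl'⟩,
      hz'⟩

lemma flipTail_mem_bounceFreePaths {p : LatticePath}
    (hp : p ∈ bounceFreePaths α k true true \ {p | p[lastIndex α {0} p]? = some false}) :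
    p[lastIndex α (Set.Ici 0) p]? = some false ∧
      heightAt α p (lastIndex α (Set.Ici 0) p) ∈ Set.Ioo 0 (α : ℤ) ∧
      flipTail (lastIndex α (Set.Ici 0) p) p ∈ bounceFreePaths α k true false ∧
      lastIndex α {heightAt α p (lastIndex α (Set.Ici 0) p)}
        (flipTail (lastIndex α (Set.Ici 0) p) p) = lastIndex α (Set.Ici 0) p := by
  obtain ⟨hL, hs, hh, hl⟩ := mem_bounceFreePaths.1 hp.1
  have hzn : lastIndex α {0} p < p.length := by
    have : p ≠ [] := by rintro rfl; cases hh
    have := List.length_pos_iff.2 this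
    have : lastIndex α {0} p ≤ p.length - 1 := lastIndex_le
    omega
  have hz : p[lastIndex α {0} p]? = some true := by
    have hS : ¬p[lastIndex α {0} p]? = some false := hp.2
    rw [List.getElem?_eq_getElem hzn] at hS ⊢
    simpa using hS
  obtain ⟨hj0, hj, hv, hvα, hneg⟩ := lastIndex_Ici_zero_spec (height_eq_zero_of_inL hL) hl hz
  obtain ⟨hs', hh', hl', hidx⟩ := flipTail_spec (height_eq_zero_of_inL hL) hs hh hj0 hj hv hneg
  exact ⟨hj, ⟨hv, hvα⟩,
    mem_bounceFreePaths.2 ⟨inL_of_perm (flipTail_perm hj) hL, hs', hh', hl'⟩, hidx⟩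

lemma unflipTail_mem_bounceFreePaths {q : LatticePath} {v : ℤ} (hv : v ∈ Set.Ioo 0 (α : ℤ))
    (hq : q ∈ bounceFreePaths α k true false) :
    unflipTail (lastIndex α {v} q) q ∈
        bounceFreePaths α k true true \ {p | p[lastIndex α {0} p]? = some false} ∧
      lastIndex α (Set.Ici 0) (unflipTail (lastIndex α {v} q) q) = lastIndex α {v} q ∧
      heightAt α (unflipTail (lastIndex α {v} q) q) (lastIndex α {v} q) = v ∧
      flipTail (lastIndex α {v} q) (unflipTail (lastIndex α {v} q) q) = q := by
  obtain ⟨hL, hs, hh, hl⟩ := mem_bounceFreePaths.1 hq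
  obtain ⟨ht0, htn, htv, hgt⟩ :=
    lastIndex_singleton_spec (height_eq_zero_of_inL hL) hl hv.1 hv.2
  obtain ⟨hs', hh', hl', hz', hidx, hpt⟩ := unflipTail_spec (height_eq_zero_of_inL hL) hs hh hl
    ht0 htn (by rw [htv]; exact hv.1) (by rw [htv]; exact hgt)
  refine ⟨⟨mem_bounceFreePaths.2
    ⟨inL_of_perm (unflipTail_perm (by omega) hl) hL, hs', hh', hl'⟩, by simp [hz']⟩,
    hidx, hpt.trans htv, flipTail_unflipTail (by omega) hl⟩

lemma ncard_bounceFreePaths_sdiff_flip :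
    (bounceFreePaths α k true true \ {p | p[lastIndex α {0} p]? = some false}).ncard =
      (Set.Ioo (0 : ℤ) α ×ˢ bounceFreePaths α k true false).ncard := by
  refine (Set.InvOn.bijOn
    (f := fun p =>
      (heightAt α p (lastIndex α (Set.Ici 0) p), flipTail (lastIndex α (Set.Ici 0) p) p))
    (f' := fun x => unflipTail (lastIndex α {x.1} x.2) x.2) ⟨?_, ?_⟩ ?_ ?_).ncard_eq
  · intro p hp
    obtain ⟨hj, -, -, hidx⟩ := flipTail_mem_bounceFreePaths hp
    simp only [hidx, unflipTail_flipTail hj]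
  · rintro ⟨v, q⟩ ⟨hv, hq⟩
    obtain ⟨-, hidx, hpt, hflip⟩ := unflipTail_mem_bounceFreePaths hv hq
    simp only [hidx, hpt, hflip]
  · intro p hp
    obtain ⟨-, hv, hq, -⟩ := flipTail_mem_bounceFreePaths hp
    exact ⟨hv, hq⟩
  · rintro ⟨v, q⟩ ⟨hv, hq⟩
    exact (unflipTail_mem_bounceFreePaths hv hq).1

theorem ncard_bounceFreePaths_true_true (hα : 1 ≤ α) (k : ℕ) :
    (bounceFreePaths α k true true).ncard =
      (bounceFreePaths α k false false).ncard +
        (α - 1) * (bounceFreePaths α k true false).ncard := by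
  rw [← Set.ncard_inter_add_ncard_sdiff_eq_ncard _ {p | p[lastIndex α {0} p]? = some false}
    (bounceFreePaths_finite α k true true), ncard_bounceFreePaths_inter_rotate hα,
    ncard_bounceFreePaths_sdiff_flip, Set.ncard_prod, ← Finset.coe_Ioo, Set.ncard_coe_finset,
    Int.card_Ioo]
  congr 2
  omega

end Counting

end LatticePath

/-- For `β = 1` and `α ≥ 1`: `f_ee(x) = f_nn(x) + (α−1)·f_en(x)`;
equivalently, for every `k ≥ 1`, the number of bounce-free EE-paths in `L_{1/α}(k)`
equals the number of bounce-free NN-paths plus `(α−1)` times the number of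
bounce-free EN-paths. -/
theorem statement12 (α : ℕ) (hα : 1 ≤ α) :
    feeSer α 1 = fnnSer α 1 + PowerSeries.C ((α : ℚ) - 1) * fenSer α 1 ∧
    ∀ k : ℕ, 1 ≤ k →
      {p | InL α 1 k p ∧ BounceFree α 1 p ∧ FirstStep p true ∧ LastStep p true}.ncard
        = {p | InL α 1 k p ∧ BounceFree α 1 p ∧ FirstStep p false ∧
            LastStep p false}.ncard
          + (α - 1) * {p | InL α 1 k p ∧ BounceFree α 1 p ∧ FirstStep p true ∧
              LastStep p false}.ncard := by
  have hcard := LatticePath.ncard_bounceFreePaths_true_true hα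
  unfold LatticePath.bounceFreePaths at hcard
  refine ⟨?_, fun k _ => hcard k⟩
  ext n
  simp only [feeSer, fnnSer, fenSer, gfOf, map_add, PowerSeries.coeff_mk, PowerSeries.coeff_C_mul]
  split_ifs
  · simp
  · rw [hcard n]
    push_cast [Nat.cast_sub hα]
    ring
end

section
/- For β = 1 and any integer α ≥ 1, g_en(x)² − g_ee(x)·g_nn(x) = g_nn(x) as formal power series over ℚ. -/
/-!
Write `H r = Σₖ C((α+1)k + r, k) xᵏ`, with the binomial coefficient of an arbitrary upper
index. Pascal's rule gives `H (r+1) = H r + x · H (r+α+1)`, and feeding this into both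
factors shows, by induction on the coefficient index, that `H r · H s` depends only on
`r + s`. Since `g_en = x · H (α-1)`, `g_ee = H (-2) - 1` and `g_nn = x² · H (2α)`, the
claimed identity is `x² (H (α-1)² - H (-2) · H (2α)) = 0`, and `(α-1) + (α-1) = (-2) + 2α`.
-/

open PowerSeries

theorem shift_nat_of_shift_one {R M : Type*} [AddCommMonoidWithOne R] {f : R → R → M}
    (h : ∀ r s, f (r + 1) s = f r (s + 1)) (m : ℕ) (r s : R) :
    f (r + m) s = f r (s + m) := by
  induction m generalizing s with
  | zero => simp
  | succ m ih => rw [Nat.cast_succ, ← add_assoc, h, ih, add_right_comm, add_assoc]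

section BinomialSeries

variable {R : Type*} [CommRing R] [BinomialRing R]

noncomputable def binomSeries (q : ℕ) (r : R) : R⟦X⟧ :=
  mk fun k => Ring.choose (q * k + r) k

theorem coeff_binomSeries (q : ℕ) (r : R) (k : ℕ) :
    coeff k (binomSeries q r) = Ring.choose (q * k + r : R) k :=
  coeff_mk _ _

theorem constantCoeff_binomSeries (q : ℕ) (r : R) : constantCoeff (binomSeries q r) = 1 := by
  rw [← coeff_zero_eq_constantCoeff_apply, coeff_binomSeries, Ring.choose_zero_right]

theorem binomSeries_add_one (q : ℕ) (r : R) :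
    binomSeries q (r + 1) = binomSeries q r + X * binomSeries q (r + q) := by
  ext (_ | k)
  · simp [constantCoeff_binomSeries]
  · simp only [map_add, coeff_succ_X_mul, coeff_binomSeries, Nat.cast_succ]
    rw [← add_assoc, Ring.choose_succ_succ, add_comm]
    congr 2
    ring

theorem coeff_binomSeries_add_one_mul (q n : ℕ) (r s : R) :
    coeff n (binomSeries q (r + 1) * binomSeries q s) =
      coeff n (binomSeries q r * binomSeries q (s + 1)) := by
  induction n generalizing r s with
  | zero => simp [constantCoeff_binomSeries]
  | succ n ih =>
    -- the defect at `(r, s)` is `X` times the defect of the shift by `q`, which vanishes below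
    have hdiff : binomSeries q (r + 1) * binomSeries q s -
        binomSeries q r * binomSeries q (s + 1) =
        X * (binomSeries q (r + q) * binomSeries q s -
          binomSeries q r * binomSeries q (s + q)) := by
      rw [binomSeries_add_one, binomSeries_add_one]; ring
    rw [← sub_eq_zero, ← map_sub, hdiff, coeff_succ_X_mul, map_sub, sub_eq_zero]
    exact shift_nat_of_shift_one
      (f := fun r s => coeff n (binomSeries q r * binomSeries q s)) ih q r s

theorem binomSeries_add_mul (q m : ℕ) (r s : R) :
    binomSeries q (r + m) * binomSeries q s = binomSeries q r * binomSeries q (s + m) := by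
  have hstep : ∀ r s : R, binomSeries q (r + 1) * binomSeries q s =
      binomSeries q r * binomSeries q (s + 1) :=
    fun r s => PowerSeries.ext fun n => coeff_binomSeries_add_one_mul q n r s
  exact shift_nat_of_shift_one (f := fun r s => binomSeries q r * binomSeries q s) hstep m r s

theorem coeff_binomSeries_eq_choose {q k N : ℕ} {r : R} (h : (q * k + r : R) = N) :
    coeff k (binomSeries q r) = N.choose k := by
  rw [coeff_binomSeries, h, Ring.choose_natCast]

end BinomialSeries

theorem genSer_eq (α : ℕ) (hα : 1 ≤ α) :
    genSer α 1 = X * binomSeries (α + 1) ((α : ℚ) - 1) := by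
  ext (_ | k)
  · simp [genSer]
  · have hN : (α + 1) * (k + 1) - 2 = α * (k + 1) - 1 + k := by grind
    rw [coeff_succ_X_mul, coeff_binomSeries_eq_choose (N := (α + 1) * (k + 1) - 2)]
    · simp [genSer, Nat.choose_symm_of_eq_add hN]
    · rw [Nat.cast_sub (by nlinarith)]; push_cast; ring

theorem geeSer_eq (α : ℕ) (hα : 1 ≤ α) :
    geeSer α 1 = binomSeries (α + 1) (-2 : ℚ) - 1 := by
  ext (_ | k)
  · simp [geeSer, constantCoeff_binomSeries]
  · rw [map_sub, coeff_one, if_neg k.succ_ne_zero, sub_zero,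
      coeff_binomSeries_eq_choose (N := (α + 1) * (k + 1) - 2)]
    · simp [geeSer]
    · rw [Nat.cast_sub (by nlinarith)]; push_cast; ring

theorem gnnSer_eq (α : ℕ) (hα : 1 ≤ α) :
    gnnSer α 1 = X ^ 2 * binomSeries (α + 1) (2 * α : ℚ) := by
  ext (_ | _ | k)
  · simp [gnnSer]
  · simp [gnnSer, coeff_X_pow_mul', Nat.choose_eq_zero_of_lt (by omega : α - 1 < α)]
  · have hN : (α + 1) * (k + 2) - 2 = α * (k + 2) + k := by grind
    rw [show k + 1 + 1 = k + 2 from rfl, coeff_X_pow_mul,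
      coeff_binomSeries_eq_choose (N := (α + 1) * (k + 2) - 2)]
    · simp [gnnSer, Nat.choose_symm_of_eq_add hN]
    · rw [Nat.cast_sub (by nlinarith)]; push_cast; ring

/-- For `β = 1` and `α ≥ 1`:
`g_en(x)² − g_ee(x)·g_nn(x) = g_nn(x)` in `ℚ[[x]]`. -/
theorem statement13 (α : ℕ) (hα : 1 ≤ α) :
    genSer α 1 ^ 2 - geeSer α 1 * gnnSer α 1 = gnnSer α 1 := by
  have key := binomSeries_add_mul (α + 1) (α + 1) (-2 : ℚ) ((α : ℚ) - 1)
  rw [show (-2 : ℚ) + ↑(α + 1) = α - 1 by push_cast; ring,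
    show (α : ℚ) - 1 + ↑(α + 1) = 2 * α by push_cast; ring] at key
  rw [genSer_eq α hα, geeSer_eq α hα, gnnSer_eq α hα]
  linear_combination X ^ 2 * key
end

section
/- For α = β = 1 and any integer b ≥ 1, the generating function G_b(x) = Σ_{n≥1} N_b(n)·x^n, where N_b(n) is the number of lattice paths from (0,0) to (n,n) having exactly b bounces (left plus right) on the line y=x, satisfies G_b(x) = 2·(c(x) − 1)^{b+1} = 2·x^{b+1}·c(x)^{2b+2}; consequently, for every integer n > b, n·N_b(n) = 2·(b+1)·C(2n, n−b−1). -/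
/-- `N_b(n)`: the number of lattice paths from `(0,0)` to `(n,n)` having exactly `b`
bounces (left plus right) on the line `y = x`. -/
noncomputable def Nb (b n : ℕ) : ℕ :=
  {p | InL 1 1 n p ∧ leftBounces 1 1 p + rightBounces 1 1 p = b}.ncard

/-- `G_b(x) = Σ_{n≥1} N_b(n)·xⁿ`. -/
noncomputable def GbSer (b : ℕ) : PowerSeries ℚ :=
  PowerSeries.mk fun n => if n = 0 then 0 else (Nb b n : ℚ)


/-!
A path from `(0,0)` to `(n,n)` whose first step is East splits uniquely, at its first return to
the diagonal, into an arch `E w N` with `w` a Dyck word and an arbitrary remaining path `v`. Bounces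
strictly inside the arch are impossible, the bounces of `v` are kept, and the return point is one
more (right) bounce exactly when `v` starts with an East step. For the series `E_b` of East-first
paths with `b` bounces this gives `E_b = x c (E_{b-1} + E_b)` (with `E_{-1} = 1`), and since
`c = 1 + x c²` it solves to `E_b = (c - 1) E_{b-1} = (c - 1)^{b+1}`. Exchanging East and North
steps swaps left and right bounces, so `G_b = 2 E_b`; the coefficients then come from the ballot
numbers `[xᵐ] cᵃ = a / (2m + a) · C(2m + a, m)`.
-/

open PowerSeries

theorem Set.ncard_setOf_eq_ncard_lt_add {P Q : ℕ → Prop} (L : ℕ) (hPQ : ∀ j, P (L + j) ↔ Q j)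
    (hQ : {j | Q j}.Finite) :
    {i | P i}.ncard = {i | i < L ∧ P i}.ncard + {j | Q j}.ncard := by
  have hsplit : {i | P i} = {i | i < L ∧ P i} ∪ (L + ·) '' {j | Q j} := by
    ext i
    rcases lt_or_ge i L with hi | hi
    · simp only [Set.mem_ofPred_eq, Set.mem_union, Set.mem_image, hi, true_and]
      exact ⟨Or.inl, fun h => h.elim id fun ⟨j, _, hj⟩ => by omega⟩
    · obtain ⟨j, rfl⟩ := Nat.exists_eq_add_of_le hi
      simp [hPQ]
  have hdisj : Disjoint {i | i < L ∧ P i} ((L + ·) '' {j | Q j}) := by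
    rw [Set.disjoint_left]
    rintro _ ⟨hi, -⟩ ⟨j, -, rfl⟩
    simp at hi
  rw [hsplit, Set.ncard_union_eq hdisj ((Set.finite_lt_nat L).subset fun _ h => h.1) (hQ.image _),
    Set.ncard_image_of_injective _ (add_right_injective L)]

namespace LatticePath

variable {α β : ℕ}

theorem setOf_inL_finite (α β k : ℕ) : {p | InL α β k p}.Finite :=
  (List.finite_length_eq Bool ((α + β) * k)).subset fun p ⟨ht, hf⟩ => by
    rw [Set.mem_ofPred_eq, ← List.count_true_add_count_false, ht, hf, add_mul]

theorem setOf_isLeftBounce_finite (α β : ℕ) (p : LatticePath) :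
    {i | IsLeftBounce α β p i}.Finite :=
  (Set.finite_lt_nat p.length).subset fun _ h => (List.getElem?_eq_some_iff.mp h.1).1

theorem setOf_isRightBounce_finite (α β : ℕ) (p : LatticePath) :
    {i | IsRightBounce α β p i}.Finite :=
  (Set.finite_lt_nat p.length).subset fun _ h => (List.getElem?_eq_some_iff.mp h.1).1

theorem getElem?_length_add_append (u v : LatticePath) (j : ℕ) :
    (u ++ v)[u.length + j]? = v[j]? := by
  rw [List.getElem?_append_right (by omega), Nat.add_sub_cancel_left]

theorem isLeftBounce_append_iff {u : LatticePath} (v : LatticePath)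
    (hu : α * u.count false = β * u.count true) (j : ℕ) :
    IsLeftBounce α β (u ++ v) (u.length + j) ↔ IsLeftBounce α β v j := by
  simp [IsLeftBounce, add_assoc, getElem?_length_add_append, List.take_length_add_append,
    mul_add, hu]

theorem isRightBounce_append_iff {u : LatticePath} (v : LatticePath)
    (hu : α * u.count false = β * u.count true) (j : ℕ) :
    IsRightBounce α β (u ++ v) (u.length + j) ↔ IsRightBounce α β v j := by
  simp [IsRightBounce, add_assoc, getElem?_length_add_append, List.take_length_add_append,
    mul_add, hu]

theorem count_map_not (l : List Bool) (b : Bool) : (l.map not).count b = l.count (!b) := by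
  simpa using List.count_map_of_injective l not Bool.not_injective (!b)

theorem isLeftBounce_map_not_iff (p : LatticePath) (i : ℕ) :
    IsLeftBounce α β (p.map not) i ↔ IsRightBounce β α p i := by
  simp only [IsLeftBounce, IsRightBounce, List.getElem?_map, ← List.map_take, count_map_not]
  simpa using fun _ _ => eq_comm

theorem isRightBounce_map_not_iff (p : LatticePath) (i : ℕ) :
    IsRightBounce α β (p.map not) i ↔ IsLeftBounce β α p i := by
  simp only [IsLeftBounce, IsRightBounce, List.getElem?_map, ← List.map_take, count_map_not]
  simpa using fun _ _ => eq_comm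

noncomputable def bounces (p : LatticePath) : ℕ := leftBounces 1 1 p + rightBounces 1 1 p

@[simp] theorem bounces_nil : bounces [] = 0 := by
  simp [bounces, leftBounces, rightBounces, IsLeftBounce, IsRightBounce]

theorem bounces_map_not (p : LatticePath) : bounces (p.map not) = bounces p := by
  simp only [bounces, leftBounces, rightBounces, isLeftBounce_map_not_iff,
    isRightBounce_map_not_iff]
  ring

end LatticePath

def DyckStep.toBool : DyckStep → Bool
  | .U => true
  | .D => false

theorem DyckStep.toBool_injective : Function.Injective DyckStep.toBool := by
  intro s t
  cases s <;> cases t <;> simp [DyckStep.toBool]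

namespace DyckWord

open LatticePath

def toPath (d : DyckWord) : LatticePath := d.toList.map DyckStep.toBool

theorem toPath_injective : Function.Injective toPath := fun _ _ h =>
  DyckWord.ext (List.map_injective_iff.mpr DyckStep.toBool_injective h)

@[simp] theorem toPath_zero : (0 : DyckWord).toPath = [] := rfl

@[simp] theorem toPath_add (d e : DyckWord) : (d + e).toPath = d.toPath ++ e.toPath :=
  List.map_append ..

theorem toPath_nest (d : DyckWord) : d.nest.toPath = true :: d.toPath ++ [false] := by
  simp [toPath, nest, DyckStep.toBool]

theorem length_toPath_nest (d : DyckWord) : d.nest.toPath.length = d.toPath.length + 2 := by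
  simp [toPath_nest]

theorem count_toPath (d : DyckWord) (s : DyckStep) : d.toPath.count s.toBool = d.toList.count s :=
  List.count_map_of_injective _ _ DyckStep.toBool_injective s

theorem count_take_toPath (d : DyckWord) (s : DyckStep) (j : ℕ) :
    (d.toPath.take j).count s.toBool = (d.toList.take j).count s := by
  rw [toPath, ← List.map_take]
  exact List.count_map_of_injective _ _ DyckStep.toBool_injective s

@[simp] theorem count_true_toPath (d : DyckWord) : d.toPath.count true = d.semilength :=
  d.count_toPath .U

@[simp] theorem count_false_toPath (d : DyckWord) : d.toPath.count false = d.semilength :=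
  (d.count_toPath .D).trans d.semilength_eq_count_D.symm

theorem nest_injective : Function.Injective nest := fun d e h => by
  simpa using congrArg insidePart h

theorem ncard_setOf_semilength_eq (i : ℕ) :
    {d : DyckWord | d.semilength = i}.ncard = catalan i := by
  rw [← Nat.card_coe_set_eq]
  show Nat.card {d : DyckWord // d.semilength = i} = _
  rw [Nat.card_eq_fintype_card, card_dyckWord_semilength_eq_catalan]

theorem setOf_semilength_eq_finite (i : ℕ) : {d : DyckWord | d.semilength = i}.Finite :=
  Set.finite_coe_iff.mp (inferInstanceAs (Finite {d : DyckWord // d.semilength = i}))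

theorem count_false_lt_count_true_take_nest (d : DyckWord) {j : ℕ} (hj : 0 < j)
    (hjl : j < d.nest.toPath.length) :
    (d.nest.toPath.take j).count false < (d.nest.toPath.take j).count true := by
  obtain ⟨i, rfl⟩ : ∃ i, j = i + 1 := ⟨j - 1, by omega⟩
  have hi : i < d.nest.firstReturn := by
    rw [firstReturn_nest, ← List.length_map (f := DyckStep.toBool)]
    rw [length_toPath_nest] at hjl
    exact Nat.lt_of_succ_lt_succ hjl
  have := count_D_lt_count_U_of_lt_firstReturn hi
  rw [← count_take_toPath, ← count_take_toPath] at this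
  exact this

theorem exists_eq_toPath_append_false_cons :
    ∀ t : LatticePath, t.count true < t.count false →
      ∃ (d : DyckWord) (v : LatticePath), t = d.toPath ++ false :: v
  | [], h => by simp at h
  | false :: t, _ => ⟨0, t, rfl⟩
  | true :: t, h => by
    obtain ⟨d, v, rfl⟩ := exists_eq_toPath_append_false_cons t (by simp at h; omega)
    -- needed by `termination_by` for the second recursive call
    have : v.length < (d.toPath ++ false :: v).length + 1 := by simp; omega
    obtain ⟨e, w, rfl⟩ := exists_eq_toPath_append_false_cons v (by simp at h; omega)
    exact ⟨d.nest + e, w, by simp [toPath_nest]⟩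
termination_by t => t.length

theorem eq_of_toPath_nest_append_eq {d e : DyckWord} {v w : LatticePath}
    (h : d.nest.toPath ++ v = e.nest.toPath ++ w) : d = e ∧ v = w := by
  have not_shorter : ∀ {d e : DyckWord} {v w : LatticePath},
      d.nest.toPath ++ v = e.nest.toPath ++ w → ¬ d.nest.toPath.length < e.nest.toPath.length := by
    intro d e v w h hlt
    have hd := congrArg (fun p => (p.take d.nest.toPath.length).count false) h
    have he := congrArg (fun p => (p.take d.nest.toPath.length).count true) h
    simp only [List.take_left, List.take_append_of_le_length hlt.le] at hd he
    have := e.count_false_lt_count_true_take_nest (by simp [length_toPath_nest]) hlt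
    simp only [count_true_toPath, count_false_toPath] at hd he
    omega
  have hlen := le_antisymm (not_lt.mp (not_shorter h.symm)) (not_lt.mp (not_shorter h))
  obtain ⟨hde, rfl⟩ := List.append_inj h hlen
  exact ⟨nest_injective (toPath_injective hde), rfl⟩

section Arch

variable (d : DyckWord) (v : LatticePath)

theorem count_take_toPath_nest_append_ne {j : ℕ} (hj : 0 < j) (hjl : j < d.toPath.length + 2) :
    ((d.nest.toPath ++ v).take j).count false ≠ ((d.nest.toPath ++ v).take j).count true := by
  have hjl' : j < d.nest.toPath.length := by rwa [length_toPath_nest]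
  rw [List.take_append_of_le_length hjl'.le]
  exact (d.count_false_lt_count_true_take_nest hj hjl').ne

theorem getElem?_toPath_nest_append (j : ℕ) :
    (d.nest.toPath ++ v)[d.toPath.length + 1 + j]? = (false :: v)[j]? := by
  simpa [toPath_nest] using getElem?_length_add_append (true :: d.toPath) (false :: v) j

theorem not_isLeftBounce_toPath_nest_append {i : ℕ} (hi : i < d.toPath.length + 2) :
    ¬ IsLeftBounce 1 1 (d.nest.toPath ++ v) i := by
  rintro ⟨hstep, -, hdiag⟩
  rcases lt_or_ge (i + 1) (d.toPath.length + 2) with hlt | hge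
  · exact d.count_take_toPath_nest_append_ne v (by omega) hlt (by simpa using hdiag)
  · obtain rfl : i = d.toPath.length + 1 := by omega
    have := d.getElem?_toPath_nest_append v 0
    simp_all

theorem isRightBounce_toPath_nest_append_iff {i : ℕ} (hi : i < d.toPath.length + 2) :
    IsRightBounce 1 1 (d.nest.toPath ++ v) i ↔
      i = d.toPath.length + 1 ∧ v.head? = some true := by
  have hnext := d.getElem?_toPath_nest_append v 1
  rw [List.getElem?_cons_succ, ← List.head?_eq_getElem?] at hnext
  constructor
  · rintro ⟨-, hstep, hdiag⟩
    rcases lt_or_ge (i + 1) (d.toPath.length + 2) with hlt | hge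
    · exact absurd (by simpa using hdiag) (d.count_take_toPath_nest_append_ne v (by omega) hlt)
    · obtain rfl : i = d.toPath.length + 1 := by omega
      exact ⟨rfl, hnext ▸ hstep⟩
  · rintro ⟨rfl, hv⟩
    refine ⟨by simpa using d.getElem?_toPath_nest_append v 0, hnext ▸ hv, ?_⟩
    rw [show d.toPath.length + 1 + 1 = d.nest.toPath.length by rw [length_toPath_nest],
      List.take_left]
    simp

theorem bounces_toPath_nest_append :
    bounces (d.nest.toPath ++ v) = bounces v + if v.head? = some true then 1 else 0 := by
  have hbal : 1 * d.nest.toPath.count false = 1 * d.nest.toPath.count true := by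
    simp [toPath_nest]
  have hleft : {i | i < d.nest.toPath.length ∧ IsLeftBounce 1 1 (d.nest.toPath ++ v) i} = ∅ :=
    Set.eq_empty_of_forall_notMem fun i ⟨hi, hb⟩ =>
      d.not_isLeftBounce_toPath_nest_append v (by rwa [← length_toPath_nest]) hb
  have hright : {i | i < d.nest.toPath.length ∧ IsRightBounce 1 1 (d.nest.toPath ++ v) i} =
      {i | i = d.toPath.length + 1 ∧ v.head? = some true} := by
    ext i
    simp only [Set.mem_ofPred_eq, length_toPath_nest]
    constructor
    · exact fun ⟨hi, hb⟩ => (d.isRightBounce_toPath_nest_append_iff v hi).mp hb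
    · rintro ⟨rfl, hv⟩
      exact ⟨by omega, (d.isRightBounce_toPath_nest_append_iff v (by omega)).mpr ⟨rfl, hv⟩⟩
  rw [bounces, bounces, leftBounces, rightBounces,
    Set.ncard_setOf_eq_ncard_lt_add _ (isLeftBounce_append_iff v hbal)
      (setOf_isLeftBounce_finite 1 1 v),
    Set.ncard_setOf_eq_ncard_lt_add _ (isRightBounce_append_iff v hbal)
      (setOf_isRightBounce_finite 1 1 v), hleft, hright]
  split_ifs with hv <;> simp [hv, leftBounces, rightBounces]
  ring

end Arch

end DyckWord

open LatticePath

noncomputable def NbEast (b n : ℕ) : ℕ :=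
  {p | InL 1 1 n p ∧ bounces p = b ∧ p.head? = some true}.ncard

theorem NbEast_zero (b : ℕ) : NbEast b 0 = 0 := by
  rw [NbEast, Set.ncard_eq_zero ((setOf_inL_finite 1 1 0).subset fun _ h => h.1)]
  ext (_ | ⟨_ | _, p⟩) <;> simp [InL]

theorem ncard_setOf_head_false_eq_NbEast (b n : ℕ) :
    {p | InL 1 1 n p ∧ bounces p = b ∧ p.head? = some false}.ncard = NbEast b n := by
  have hinv : Function.LeftInverse (List.map not) (List.map not) := fun p => by
    simp [Function.comp_def]
  have hflip : {p | InL 1 1 n p ∧ bounces p = b ∧ p.head? = some false} =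
      List.map not '' {p | InL 1 1 n p ∧ bounces p = b ∧ p.head? = some true} := by
    rw [Set.image_eq_preimage_of_inverse hinv hinv]
    ext p
    simp [InL, count_map_not, bounces_map_not, and_comm]
  rw [hflip, Set.ncard_image_of_injective _ hinv.injective]
  rfl

theorem Nb_eq_two_mul_NbEast (b : ℕ) {n : ℕ} (hn : 0 < n) : Nb b n = 2 * NbEast b n := by
  have hsplit : {p | InL 1 1 n p ∧ leftBounces 1 1 p + rightBounces 1 1 p = b} =
      {p | InL 1 1 n p ∧ bounces p = b ∧ p.head? = some true} ∪
        {p | InL 1 1 n p ∧ bounces p = b ∧ p.head? = some false} := by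
    ext (_ | ⟨_ | _, p⟩) <;> simp [InL, bounces]; omega
  have hfin := setOf_inL_finite 1 1 n
  rw [Nb, hsplit, Set.ncard_union_eq ?_ (hfin.subset fun _ h => h.1) (hfin.subset fun _ h => h.1),
    ncard_setOf_head_false_eq_NbEast, NbEast, two_mul]
  exact Set.disjoint_left.mpr fun p h h' => by simp [h.2.2] at h'

def restSet (b m : ℕ) : Set LatticePath :=
  {v | InL 1 1 m v ∧ bounces v + (if v.head? = some true then 1 else 0) = b}

theorem ncard_restSet_zero (m : ℕ) :
    (restSet 0 m).ncard = (if m = 0 then 1 else 0) + NbEast 0 m := by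
  have hsplit : restSet 0 m = {v | InL 1 1 m v ∧ v = []} ∪
      {p | InL 1 1 m p ∧ bounces p = 0 ∧ p.head? = some false} := by
    ext (_ | ⟨_ | _, p⟩) <;> simp [restSet]
  have hnil : {v | InL 1 1 m v ∧ v = []} = if m = 0 then {[]} else ∅ := by
    split_ifs with hm <;> ext (_ | ⟨_, p⟩) <;> simp [InL, hm, eq_comm]
  have hfin := setOf_inL_finite 1 1 m
  rw [hsplit, Set.ncard_union_eq ?_ (hfin.subset fun _ h => h.1) (hfin.subset fun _ h => h.1),
    ncard_setOf_head_false_eq_NbEast, hnil]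
  · split_ifs <;> simp
  · exact Set.disjoint_left.mpr fun p (h : _ ∧ p = []) h' => by simp [h.2] at h'

theorem ncard_restSet_succ (b m : ℕ) :
    (restSet (b + 1) m).ncard = NbEast b m + NbEast (b + 1) m := by
  have hsplit : restSet (b + 1) m =
      {p | InL 1 1 m p ∧ bounces p = b ∧ p.head? = some true} ∪
        {p | InL 1 1 m p ∧ bounces p = b + 1 ∧ p.head? = some false} := by
    ext (_ | ⟨_ | _, p⟩) <;> simp [restSet]
  have hfin := setOf_inL_finite 1 1 m
  rw [hsplit, Set.ncard_union_eq ?_ (hfin.subset fun _ h => h.1) (hfin.subset fun _ h => h.1),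
    ncard_setOf_head_false_eq_NbEast]
  · rfl
  · exact Set.disjoint_left.mpr fun p h h' => by simp [h.2.2] at h'

open Finset in
theorem setOf_NbEast_succ_eq_biUnion (b n : ℕ) :
    {p | InL 1 1 (n + 1) p ∧ bounces p = b ∧ p.head? = some true} =
      ⋃ ij ∈ antidiagonal n, Set.image2 (fun (d : DyckWord) v => d.nest.toPath ++ v)
        {d | d.semilength = ij.1} (restSet b ij.2) := by
  ext p
  simp only [Set.mem_iUnion, Set.mem_image2, exists_prop]
  constructor
  · rintro ⟨⟨ht, hf⟩, rfl, hh⟩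
    obtain ⟨t, rfl⟩ : ∃ t, p = true :: t := ⟨p.tail, by cases p <;> simp_all⟩
    obtain ⟨d, v, rfl⟩ := DyckWord.exists_eq_toPath_append_false_cons t (by simp at ht hf; omega)
    have hp : d.nest.toPath ++ v = true :: (d.toPath ++ false :: v) := by
      simp [DyckWord.toPath_nest]
    simp at ht hf
    refine ⟨(d.semilength, n - d.semilength), by simp; omega, d, rfl, v, ⟨⟨?_, ?_⟩, ?_⟩, hp⟩
    · simp; omega
    · simp; omega
    · rw [← hp, DyckWord.bounces_toPath_nest_append]
  · rintro ⟨⟨i, j⟩, hij, d, rfl, v, ⟨⟨hvt, hvf⟩, hvb⟩, rfl⟩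
    rw [HasAntidiagonal.mem_antidiagonal] at hij
    refine ⟨⟨?_, ?_⟩, by rw [DyckWord.bounces_toPath_nest_append, hvb],
      by simp [DyckWord.toPath_nest]⟩
    · simp [DyckWord.toPath_nest] at hvt ⊢; omega
    · simp [DyckWord.toPath_nest] at hvf ⊢; omega

open Finset in
theorem NbEast_succ (b n : ℕ) :
    NbEast b (n + 1) = ∑ ij ∈ antidiagonal n, catalan ij.1 * (restSet b ij.2).ncard := by
  have hinj : Function.Injective fun x : DyckWord × LatticePath => x.1.nest.toPath ++ x.2 :=
    fun x y h => Prod.ext_iff.mpr (DyckWord.eq_of_toPath_nest_append_eq h)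
  have hfin (ij : ℕ × ℕ) : (Set.image2 (fun (d : DyckWord) v => d.nest.toPath ++ v)
      {d | d.semilength = ij.1} (restSet b ij.2)).Finite :=
    (DyckWord.setOf_semilength_eq_finite ij.1).image2 _
      ((setOf_inL_finite 1 1 ij.2).subset fun _ h => h.1)
  have hdisj : (antidiagonal n : Set (ℕ × ℕ)).PairwiseDisjoint fun ij =>
      Set.image2 (fun (d : DyckWord) v => d.nest.toPath ++ v)
        {d | d.semilength = ij.1} (restSet b ij.2) := by
    rintro ⟨i, j⟩ hij ⟨i', j'⟩ hij' hne
    refine Set.disjoint_left.mpr ?_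
    rintro _ ⟨d, rfl, v, -, rfl⟩ ⟨d', hd', v', -, h⟩
    obtain ⟨rfl, rfl⟩ := DyckWord.eq_of_toPath_nest_append_eq h
    simp only [mem_coe, HasAntidiagonal.mem_antidiagonal, Set.mem_ofPred_eq] at hij hij' hd'
    exact hne (Prod.ext hd' (by dsimp only; omega))
  rw [NbEast, setOf_NbEast_succ_eq_biUnion, ← set_biUnion_coe,
    Set.Finite.ncard_biUnion (finite_toSet _) (fun ij _ => hfin ij) hdisj, finsum_mem_coe_finset]
  refine sum_congr rfl fun ij _ => ?_
  rw [← Set.image_prod, Set.ncard_image_of_injective _ hinj, Set.ncard_prod,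
    DyckWord.ncard_setOf_semilength_eq]

theorem coeff_fussCatalan_one (n : ℕ) : coeff n (fussCatalan 1) = catalan n := by
  rw [fussCatalan, coeff_mk, catalan_eq_centralBinom_div,
    Nat.cast_div (Nat.succ_dvd_centralBinom n) (by positivity), Nat.centralBinom]
  push_cast
  ring_nf

@[simp] theorem constantCoeff_fussCatalan_one : constantCoeff (fussCatalan 1) = 1 := by
  simp [← coeff_zero_eq_constantCoeff, coeff_fussCatalan_one]

theorem fussCatalan_one_eq : fussCatalan 1 = 1 + X * fussCatalan 1 ^ 2 := by
  ext (_ | n)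
  · simp
  · rw [map_add, coeff_one, if_neg n.succ_ne_zero, coeff_succ_X_mul, zero_add, pow_two, coeff_mul,
      coeff_fussCatalan_one, catalan_succ']
    push_cast
    simp [coeff_fussCatalan_one]

theorem fussCatalan_one_sub_one : fussCatalan 1 - 1 = X * fussCatalan 1 ^ 2 := by
  linear_combination fussCatalan_one_eq

/-- The ballot numbers `[xᵐ] c(x)ᵃ = a / (2m + a) · C(2m + a, m)`, multiplied out so that the
identity also holds when `2m + a = 0`. -/
theorem coeff_fussCatalan_one_pow (m a : ℕ) :
    (2 * m + a : ℚ) * coeff m (fussCatalan 1 ^ a) = a * (2 * m + a).choose m := by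
  induction m generalizing a with
  | zero => simp [coeff_zero_eq_constantCoeff]
  | succ m ihm =>
    induction a with
    | zero => simp [coeff_one]
    | succ a iha =>
      have hpow : fussCatalan 1 ^ (a + 1) = fussCatalan 1 ^ a + X * fussCatalan 1 ^ (a + 2) := by
        linear_combination fussCatalan 1 ^ a * fussCatalan_one_eq
      have hrec := ihm (a + 2)
      have hpascal : ((2 * m + a + 3).choose (m + 1) : ℚ) =
          (2 * m + a + 2).choose m + (2 * m + a + 2).choose (m + 1) := by
        exact_mod_cast Nat.choose_succ_succ' (2 * m + a + 2) m
      have hsucc : ((2 * m + a + 2).choose (m + 1) : ℚ) * (m + 1) =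
          (2 * m + a + 2).choose m * (m + a + 2) := by
        have := Nat.choose_succ_right_eq (2 * m + a + 2) m
        rw [show 2 * m + a + 2 - m = m + a + 2 by omega] at this
        exact_mod_cast this
      rw [show 2 * (m + 1) + a = 2 * m + a + 2 by ring] at iha
      rw [show 2 * m + (a + 2) = 2 * m + a + 2 by ring] at hrec
      rw [hpow, map_add, coeff_succ_X_mul, show 2 * (m + 1) + (a + 1) = 2 * m + a + 3 by ring]
      push_cast at iha hrec ⊢
      refine mul_left_cancel₀ (show (2 * m + a + 2 : ℚ) ≠ 0 by positivity) ?_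
      linear_combination (2 * m + a + 3 : ℚ) * (iha + hrec) - 2 * hsucc -
        (2 * m + a + 2 : ℚ) * (a + 1) * hpascal

noncomputable def GbEast (b : ℕ) : PowerSeries ℚ := mk fun n => (NbEast b n : ℚ)

theorem GbEast_eq (b : ℕ) :
    GbEast b = X * (fussCatalan 1 * mk fun m => ((restSet b m).ncard : ℚ)) := by
  ext (_ | n)
  · simp [GbEast, NbEast_zero]
  · rw [GbEast, coeff_mk, coeff_succ_X_mul, coeff_mul, NbEast_succ]
    push_cast
    simp [coeff_fussCatalan_one]

theorem mk_ncard_restSet_zero : (mk fun m => ((restSet 0 m).ncard : ℚ)) = 1 + GbEast 0 := by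
  ext m
  simp [ncard_restSet_zero, GbEast, coeff_one]

theorem mk_ncard_restSet_succ (b : ℕ) :
    (mk fun m => ((restSet (b + 1) m).ncard : ℚ)) = GbEast b + GbEast (b + 1) := by
  ext m
  simp [ncard_restSet_succ, GbEast]

theorem eq_fussCatalan_one_sub_one_mul {E Q : PowerSeries ℚ}
    (h : E = X * (fussCatalan 1 * (Q + E))) : E = (fussCatalan 1 - 1) * Q := by
  linear_combination fussCatalan 1 * h - (E + Q) * fussCatalan_one_eq

theorem GbEast_eq_pow (b : ℕ) : GbEast b = (fussCatalan 1 - 1) ^ (b + 1) := by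
  induction b with
  | zero =>
    rw [zero_add, pow_one, ← mul_one (fussCatalan 1 - 1)]
    exact eq_fussCatalan_one_sub_one_mul (by rw [← mk_ncard_restSet_zero, ← GbEast_eq])
  | succ b ih =>
    rw [pow_succ', ← ih]
    exact eq_fussCatalan_one_sub_one_mul (by rw [← mk_ncard_restSet_succ, ← GbEast_eq])

theorem GbSer_eq_two_mul_GbEast (b : ℕ) : GbSer b = 2 * GbEast b := by
  ext (_ | n)
  · simp [GbSer, GbEast, NbEast_zero]
  · rw [GbSer, coeff_mk, if_neg n.succ_ne_zero, Nb_eq_two_mul_NbEast b n.succ_pos, two_mul,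
      two_mul, map_add, GbEast, coeff_mk]
    push_cast
    rfl

theorem statement16_general (b : ℕ) :
    GbSer b = 2 * (fussCatalan 1 - 1) ^ (b + 1) ∧
    GbSer b = 2 * PowerSeries.X ^ (b + 1) * fussCatalan 1 ^ (2 * b + 2) ∧
    ∀ n : ℕ, b < n → n * Nb b n = 2 * (b + 1) * (2 * n).choose (n - b - 1) := by
  have hpow : GbSer b = 2 * (fussCatalan 1 - 1) ^ (b + 1) := by
    rw [GbSer_eq_two_mul_GbEast, GbEast_eq_pow]
  have hmonomial : GbSer b = 2 * X ^ (b + 1) * fussCatalan 1 ^ (2 * b + 2) := by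
    rw [hpow, fussCatalan_one_sub_one]
    ring
  refine ⟨hpow, hmonomial, fun n hn => ?_⟩
  obtain ⟨m, rfl⟩ : ∃ m, n = m + (b + 1) := ⟨n - (b + 1), by omega⟩
  have hNb : (Nb b (m + (b + 1)) : ℚ) = 2 * coeff m (fussCatalan 1 ^ (2 * b + 2)) := by
    have := congrArg (coeff (m + (b + 1))) hmonomial
    rwa [GbSer, coeff_mk, if_neg (by omega), mul_assoc, two_mul, map_add, coeff_X_pow_mul,
      ← two_mul] at this
  have hballot := coeff_fussCatalan_one_pow m (2 * b + 2)
  rw [show m + (b + 1) - b - 1 = m by omega, show 2 * (m + (b + 1)) = 2 * m + (2 * b + 2) by ring]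
  qify
  rw [hNb]
  push_cast at hballot ⊢
  linear_combination hballot

/-- For `b ≥ 1`: `G_b(x) = 2·(c(x) − 1)^{b+1} = 2·x^{b+1}·c(x)^{2b+2}`,
and for every `n > b`, `n·N_b(n) = 2·(b+1)·C(2n, n−b−1)`. -/
theorem statement16 (b : ℕ) (hb : 1 ≤ b) :
    GbSer b = 2 * (fussCatalan 1 - 1) ^ (b + 1) ∧
    GbSer b = 2 * PowerSeries.X ^ (b + 1) * fussCatalan 1 ^ (2 * b + 2) ∧
    ∀ n : ℕ, b < n → n * Nb b n = 2 * (b + 1) * (2 * n).choose (n - b - 1) :=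
  statement16_general b
end

section
/- For β = 1 and any integer α ≥ 1, the generating functions nhc_ee(x) and nhc_en(x) counting EE-paths, respectively EN-paths, in L_{1/α}(k) with no horizontal crosses satisfy nhc_ee(x)·(1 + g_ee(x)) = g_ee(x) and nhc_en(x)·(1 + g_ee(x)) = g_en(x); moreover nhc_en(x) also counts NE-paths in L_{1/α}(k) with no horizontal crosses, and h_{E✳}(x) := nhc_ee(x) + nhc_en(x), which counts paths in L_{1/α}(k) that start with an E-step and have no horizontal crosses, equals Σ_{k≥1} (α(α+2)/((α+1)k+1))·C((α+1)k+1, k−1)·x^k. -/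
/-- Generating function of EE-paths in `L_{1/α}(k)` with no horizontal crosses. -/
noncomputable def nhcEE (α : ℕ) : PowerSeries ℚ :=
  gfOf fun k => {p | InL α 1 k p ∧ NoHCross α p ∧ FirstStep p true ∧ LastStep p true}

/-- Generating function of EN-paths in `L_{1/α}(k)` with no horizontal crosses. -/
noncomputable def nhcEN (α : ℕ) : PowerSeries ℚ :=
  gfOf fun k => {p | InL α 1 k p ∧ NoHCross α p ∧ FirstStep p true ∧ LastStep p false}

/-- Generating function of NE-paths in `L_{1/α}(k)` with no horizontal crosses. -/
noncomputable def nhcNE (α : ℕ) : PowerSeries ℚ :=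
  gfOf fun k => {p | InL α 1 k p ∧ NoHCross α p ∧ FirstStep p false ∧ LastStep p true}

/-- Generating function of paths in `L_{1/α}(k)` that start with an E-step and have
no horizontal crosses. -/
noncomputable def hEstar (α : ℕ) : PowerSeries ℚ :=
  gfOf fun k => {p | InL α 1 k p ∧ NoHCross α p ∧ FirstStep p true}

/-!
Cutting an `E`-starting path at its first horizontal cross `(αi, i)` writes it uniquely as a
cross-free `EE`-path in `L_{1/α}(i)` followed by an `E`-starting path in `L_{1/α}(k - i)` with
the same last step. Hence `g_ee = nhc_ee + nhc_ee·g_ee` and `g_en = nhc_en + nhc_ee·g_en`, which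
give the first two identities. Reversal exchanges `NE`- and `EN`-paths and moves a horizontal
cross at `(αi, i)` to one at `(α(k - i), k - i)`. Finally `h_{E✳} = nhc_ee + nhc_en`, so
`h_{E✳}·(1 + g_ee) = g_ee + g_en`. The explicit series has `k`-th coefficient `α·A_{k-1}(α + 2)`
for the Rothe numbers `A_m(a) = a/(a + t m)·C(a + t m, m)` with `t = α + 1`, and it satisfies the
same equation by Gould's convolution `∑_{m+j=K} A_m(a)·C(b + t j, j) = C(a + b + t K, K)`, taken
at the negative upper parameter `b = -2`: the coefficients of `1 + g_ee` are the generalized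
binomials `C(-2 + t j, j)`.
-/

lemma finite_setOf_count (a b : ℕ) :
    {p : LatticePath | p.count true = a ∧ p.count false = b}.Finite :=
  (List.finite_length_eq Bool (a + b)).subset fun p ⟨ha, hb⟩ => by
    rw [Set.mem_ofPred_eq, ← List.count_true_add_count_false p, ha, hb]

theorem ncard_setOf_count : ∀ a b : ℕ,
    {p : LatticePath | p.count true = a ∧ p.count false = b}.ncard = (a + b).choose b
  | 0, 0 => by
    rw [show {p : LatticePath | p.count true = 0 ∧ p.count false = 0} = {[]} by
      ext (_ | ⟨_ | _, _⟩) <;> simp]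
    simp
  | a + 1, 0 => by
    rw [show {p : LatticePath | p.count true = a + 1 ∧ p.count false = 0} =
        List.cons true '' {p | p.count true = a ∧ p.count false = 0} by
      ext (_ | ⟨_ | _, _⟩) <;> simp,
      Set.ncard_image_of_injective _ List.cons_injective, ncard_setOf_count a 0]
    simp
  | 0, b + 1 => by
    rw [show {p : LatticePath | p.count true = 0 ∧ p.count false = b + 1} =
        List.cons false '' {p | p.count true = 0 ∧ p.count false = b} by
      ext (_ | ⟨_ | _, _⟩) <;> simp,
      Set.ncard_image_of_injective _ List.cons_injective, ncard_setOf_count 0 b]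
    simp
  | a + 1, b + 1 => by
    rw [show {p : LatticePath | p.count true = a + 1 ∧ p.count false = b + 1} =
        List.cons true '' {p | p.count true = a ∧ p.count false = b + 1} ∪
          List.cons false '' {p | p.count true = a + 1 ∧ p.count false = b} by
      ext (_ | ⟨_ | _, _⟩) <;> simp,
      Set.ncard_union_eq (Set.disjoint_left.2 <| by
        rintro _ ⟨_, _, rfl⟩ ⟨_, _, h⟩; simp at h) ((finite_setOf_count _ _).image _)
        ((finite_setOf_count _ _).image _),
      Set.ncard_image_of_injective _ List.cons_injective,
      Set.ncard_image_of_injective _ List.cons_injective,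
      ncard_setOf_count a (b + 1), ncard_setOf_count (a + 1) b,
      show a + 1 + (b + 1) = a + (b + 1) + 1 by omega, Nat.choose_succ_succ', add_comm]
    congr 2
    omega

lemma lastStep_cons_append_singleton (x y : Bool) (q : LatticePath) :
    LastStep (x :: (q ++ [y])) y := by
  simp only [LastStep, ← List.cons_append, List.getLast?_concat]

lemma cons_append_singleton_injective (x y : Bool) :
    Function.Injective fun q : LatticePath => x :: (q ++ [y]) :=
  fun _ _ h => List.append_left_injective [y] (List.cons_injective h)

lemma setOf_firstStep_lastStep_eq_image {P : LatticePath → Prop}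
    (hP : ∀ p, P p → 2 ≤ p.length) (x y : Bool) :
    {p | P p ∧ FirstStep p x ∧ LastStep p y} =
      (fun q => x :: (q ++ [y])) '' {q | P (x :: (q ++ [y]))} := by
  ext p
  constructor
  · rintro ⟨hp, hx, hy⟩
    obtain _ | ⟨x', t⟩ := p
    · simpa using hP _ hp
    obtain rfl : x = x' := by simpa [FirstStep] using hx.symm
    have ht : t ≠ [] := by rintro rfl; simpa using hP _ hp
    obtain ⟨q, y', rfl⟩ : ∃ q y', t = q ++ [y'] :=
      ⟨_, _, (List.dropLast_append_getLast ht).symm⟩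
    obtain rfl : y = y' := by simpa using hy.symm.trans (lastStep_cons_append_singleton x y' q)
    exact ⟨q, hp, rfl⟩
  · rintro ⟨q, hq, rfl⟩
    exact ⟨hq, rfl, lastStep_cons_append_singleton x y q⟩

lemma two_le_length_of_count {a b : ℕ} (h : 2 ≤ a + b) (p : LatticePath)
    (hp : p.count true = a ∧ p.count false = b) : 2 ≤ p.length := by
  rwa [← List.count_true_add_count_false p, hp.1, hp.2]

theorem ncard_firstStep_true_lastStep_true {a b : ℕ} (ha : 1 ≤ a) (hb : 1 ≤ b) :
    {p : LatticePath | (p.count true = a ∧ p.count false = b) ∧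
      FirstStep p true ∧ LastStep p true}.ncard = (a + b - 2).choose b := by
  rw [setOf_firstStep_lastStep_eq_image (two_le_length_of_count (by omega)),
    Set.ncard_image_of_injective _ (cons_append_singleton_injective _ _)]
  obtain ⟨a, rfl⟩ | rfl : (∃ a', a = a' + 2) ∨ a = 1 := by
    rcases Nat.exists_eq_add_of_le' ha with ⟨a, rfl⟩
    rcases a with _ | a <;> simp
  · simp [ncard_setOf_count, show a + 2 + b - 2 = a + b by omega]
  · simpa using (Nat.choose_eq_zero_of_lt (by omega)).symm

theorem ncard_firstStep_true_lastStep_false {a b : ℕ} (ha : 1 ≤ a) (hb : 1 ≤ b) :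
    {p : LatticePath | (p.count true = a ∧ p.count false = b) ∧
      FirstStep p true ∧ LastStep p false}.ncard = (a + b - 2).choose (a - 1) := by
  rw [setOf_firstStep_lastStep_eq_image (two_le_length_of_count (by omega)),
    Set.ncard_image_of_injective _ (cons_append_singleton_injective _ _)]
  obtain ⟨a, rfl⟩ := Nat.exists_eq_add_of_le' ha
  obtain ⟨b, rfl⟩ := Nat.exists_eq_add_of_le' hb
  simpa [ncard_setOf_count, show a + 1 + (b + 1) - 2 = a + b by omega] using
    Nat.choose_symm_add.symm

lemma coeff_gfOf (S : ℕ → Set LatticePath) (k : ℕ) :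
    PowerSeries.coeff k (gfOf S) = if k = 0 then 0 else ((S k).ncard : ℚ) :=
  PowerSeries.coeff_mk _ _

open Finset in
lemma coeff_gfOf_mul (S T : ℕ → Set LatticePath) (k : ℕ) :
    PowerSeries.coeff k (gfOf S * gfOf T) =
      ∑ i ∈ Ico 1 k, ((S i).ncard * (T (k - i)).ncard : ℚ) := by
  have hsub : Ico 1 k ⊆ range (k + 1) := fun i hi => by
    rw [mem_Ico] at hi; rw [mem_range]; omega
  rw [PowerSeries.coeff_mul, Nat.sum_antidiagonal_eq_sum_range_succ_mk, ← sum_subset hsub]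
  · refine sum_congr rfl fun i hi => ?_
    rw [mem_Ico] at hi
    rw [coeff_gfOf, coeff_gfOf, if_neg (by omega), if_neg (by omega)]
  · intro i hi hi'
    rw [mem_range] at hi
    rw [mem_Ico] at hi'
    obtain rfl | rfl : i = 0 ∨ i = k := by omega
    all_goals simp [coeff_gfOf]

lemma gfOf_congr {S T : ℕ → Set LatticePath} (h : ∀ k, (S k).ncard = (T k).ncard) :
    gfOf S = gfOf T := by
  simp only [gfOf, h]

lemma gfOf_eq_add {S A B : ℕ → Set LatticePath}
    (h : ∀ k, 1 ≤ k → (S k).ncard = (A k).ncard + (B k).ncard) :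
    gfOf S = gfOf A + gfOf B := by
  ext k
  rw [map_add, coeff_gfOf, coeff_gfOf, coeff_gfOf]
  split_ifs with hk
  · simp
  · rw [h k (by omega), Nat.cast_add]

section InL

variable {α β i k : ℕ} {p q r : LatticePath}

lemma InL.length_eq (h : InL α β k p) : p.length = (α + β) * k := by
  rw [← List.count_true_add_count_false p, h.1, h.2, add_mul]

lemma InL.ne_nil (hp : InL α β k p) (hk : 1 ≤ k) (hαβ : 1 ≤ α + β) : p ≠ [] := by
  rintro rfl
  exact Nat.mul_ne_zero (by omega) (by omega) hp.length_eq.symm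

lemma InL.reverse (hp : InL α β k p) : InL α β k p.reverse := by
  simpa only [InL, List.count_reverse] using hp

lemma InL.append_iff (hq : InL α β i q) (hik : i ≤ k) :
    InL α β k (q ++ r) ↔ InL α β (k - i) r := by
  obtain ⟨k, rfl⟩ := Nat.exists_eq_add_of_le hik
  simp only [InL, List.count_append, hq.1, hq.2, Nat.add_sub_cancel_left, mul_add]
  omega

lemma finite_of_forall_inL {S : Set LatticePath} (hS : ∀ p ∈ S, InL α β k p) : S.Finite :=
  (finite_setOf_count _ _).subset hS

end InL

def abPaths (α β k : ℕ) (x y : Bool) : Set LatticePath :=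
  {p | InL α β k p ∧ FirstStep p x ∧ LastStep p y}

theorem gfOf_abPaths_true_true {α β : ℕ} (hα : 1 ≤ α) (hβ : 1 ≤ β) :
    gfOf (fun k => abPaths α β k true true) = geeSer α β := by
  ext k
  rw [coeff_gfOf, geeSer, PowerSeries.coeff_mk]
  split_ifs with hk
  · rfl
  simp only [abPaths, InL]
  rw [ncard_firstStep_true_lastStep_true (Nat.mul_pos hα (Nat.pos_of_ne_zero hk))
    (Nat.mul_pos hβ (Nat.pos_of_ne_zero hk)), add_mul]

theorem gfOf_abPaths_true_false {α β : ℕ} (hα : 1 ≤ α) (hβ : 1 ≤ β) :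
    gfOf (fun k => abPaths α β k true false) = genSer α β := by
  ext k
  rw [coeff_gfOf, genSer, PowerSeries.coeff_mk]
  split_ifs with hk
  · rfl
  simp only [abPaths, InL]
  rw [ncard_firstStep_true_lastStep_false (Nat.mul_pos hα (Nat.pos_of_ne_zero hk))
    (Nat.mul_pos hβ (Nat.pos_of_ne_zero hk)), add_mul]

def nhcPaths (α k : ℕ) (x y : Bool) : Set LatticePath :=
  {p | InL α 1 k p ∧ NoHCross α p ∧ FirstStep p x ∧ LastStep p y}

def IsFirstHCross (α : ℕ) (p : LatticePath) (i : ℕ) : Prop :=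
  HasHCrossAt α p i ∧ ∀ j < i, ¬ HasHCrossAt α p j

section HorizontalCross

variable {α i j k : ℕ} {p q r : LatticePath}

lemma HasHCrossAt.lt_length (h : HasHCrossAt α p i) : (α + 1) * i < p.length :=
  (List.getElem?_eq_some_iff.1 h.2.2.2).1

lemma HasHCrossAt.lt_of_inL (h : HasHCrossAt α p i) (hp : InL α 1 k p) : i < k := by
  have := h.lt_length
  rw [hp.length_eq] at this
  exact Nat.lt_of_mul_lt_mul_left this

lemma hasHCrossAt_append_of_lt (hq : InL α 1 i q) (hj : j < i) :
    HasHCrossAt α (q ++ r) j ↔ HasHCrossAt α q j := by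
  have hlen : (α + 1) * j < q.length := by
    rw [hq.length_eq]; exact Nat.mul_lt_mul_of_pos_left hj (by omega)
  unfold HasHCrossAt
  rw [List.take_append_of_le_length hlen.le, List.getElem?_append_left hlen,
    List.getElem?_append_left (by omega)]

lemma hasHCrossAt_append_iff (hq : InL α 1 i q) (hi : 1 ≤ i) :
    HasHCrossAt α (q ++ r) i ↔ q.getLast? = some true ∧ r.head? = some true := by
  have hlen := hq.length_eq
  have hpos : 1 ≤ (α + 1) * i := Nat.mul_pos (Nat.succ_pos α) hi
  unfold HasHCrossAt
  rw [List.take_append_of_le_length hlen.ge, List.take_of_length_le hlen.le,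
    List.getElem?_append_left (by omega), List.getElem?_append_right hlen.le, ← hlen,
    Nat.sub_self, ← List.head?_eq_getElem?, ← List.getLast?_eq_getElem?]
  simp [hi, hq.1]

lemma hasHCrossAt_iff_exists_append :
    HasHCrossAt α p i ↔ 1 ≤ i ∧ ∃ q r, p = q ++ r ∧ InL α 1 i q ∧
      q.getLast? = some true ∧ r.head? = some true := by
  constructor
  · intro h
    have hq : InL α 1 i (p.take ((α + 1) * i)) := by
      refine ⟨h.2.1, ?_⟩
      have := List.count_true_add_count_false (p.take ((α + 1) * i))
      rw [List.length_take_of_le h.lt_length.le, h.2.1] at this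
      linarith
    refine ⟨h.1, _, _, (List.take_append_drop _ p).symm, hq,
      (hasHCrossAt_append_iff hq h.1).1 ?_⟩
    rwa [List.take_append_drop]
  · rintro ⟨hi, q, r, rfl, hq, hlast⟩
    exact (hasHCrossAt_append_iff hq hi).2 hlast

lemma HasHCrossAt.reverse (hp : InL α 1 k p) (h : HasHCrossAt α p i) :
    HasHCrossAt α p.reverse (k - i) := by
  have hik : i < k := h.lt_of_inL hp
  obtain ⟨hi, q, r, rfl, hq, hlast, hhead⟩ := hasHCrossAt_iff_exists_append.1 h
  have hr : InL α 1 (k - i) r := (hq.append_iff hik.le).1 hp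
  rw [List.reverse_append, hasHCrossAt_append_iff hr.reverse (by omega),
    List.getLast?_reverse, List.head?_reverse]
  exact ⟨hhead, hlast⟩

lemma NoHCross.reverse (hp : InL α 1 k p) (h : NoHCross α p) : NoHCross α p.reverse :=
  fun i hi => h (k - i) (by simpa using hi.reverse hp.reverse)

lemma exists_isFirstHCross (h : ¬ NoHCross α p) : ∃ i, IsFirstHCross α p i := by
  classical
  simp only [NoHCross, not_forall, not_not] at h
  exact ⟨Nat.find h, Nat.find_spec h, fun j => Nat.find_min h⟩

lemma IsFirstHCross.eq (hi : IsFirstHCross α p i) (hj : IsFirstHCross α p j) : i = j := by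
  by_contra hne
  rcases Nat.lt_or_gt_of_ne hne with h | h
  · exact hj.2 i h hi.1
  · exact hi.2 j h hj.1

lemma isFirstHCross_append_iff (hq : InL α 1 i q) (hi : 1 ≤ i) :
    IsFirstHCross α (q ++ r) i ↔
      NoHCross α q ∧ q.getLast? = some true ∧ r.head? = some true := by
  rw [IsFirstHCross, hasHCrossAt_append_iff hq hi]
  constructor
  · rintro ⟨hcross, hmin⟩
    refine ⟨fun j hj => ?_, hcross⟩
    rcases lt_or_ge j i with hji | hji
    · exact hmin j hji ((hasHCrossAt_append_of_lt hq hji).2 hj)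
    · exact absurd (hj.lt_of_inL hq) (by omega)
  · rintro ⟨hnc, hcross⟩
    exact ⟨hcross, fun j hji hj => hnc j ((hasHCrossAt_append_of_lt hq hji).1 hj)⟩

lemma setOf_isFirstHCross_eq_image (y : Bool) (hi : 1 ≤ i) (hik : i ≤ k) :
    {p | p ∈ abPaths α 1 k true y ∧ IsFirstHCross α p i} =
      (fun x : LatticePath × LatticePath => x.1 ++ x.2) ''
        (nhcPaths α i true true ×ˢ abPaths α 1 (k - i) true y) := by
  ext p
  constructor
  · rintro ⟨⟨hp, hfirst, hlast⟩, hfc⟩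
    obtain ⟨-, q, r, rfl, hq, -⟩ := hasHCrossAt_iff_exists_append.1 hfc.1
    obtain ⟨hnc, hqlast, hrhead⟩ := (isFirstHCross_append_iff hq hi).1 hfc
    have hr : r ≠ [] := by rintro rfl; simp at hrhead
    refine ⟨(q, r), ⟨⟨hq, hnc, ?_, hqlast⟩, (hq.append_iff hik).1 hp, hrhead, ?_⟩, rfl⟩
    · rwa [FirstStep, List.head?_append_of_ne_nil _ (hq.ne_nil hi (by omega))] at hfirst
    · rwa [LastStep, List.getLast?_append_of_ne_nil _ hr] at hlast
  · rintro ⟨⟨q, r⟩, ⟨⟨hq, hnc, hqfirst, hqlast⟩, hr, hrfirst, hrlast⟩, rfl⟩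
    have hr' : r ≠ [] := by rintro rfl; simp [FirstStep] at hrfirst
    refine ⟨⟨(hq.append_iff hik).2 hr, ?_, ?_⟩,
      (isFirstHCross_append_iff hq hi).2 ⟨hnc, hqlast, hrfirst⟩⟩
    · rwa [FirstStep, List.head?_append_of_ne_nil _ (hq.ne_nil hi (by omega))]
    · rwa [LastStep, List.getLast?_append_of_ne_nil _ hr']

lemma ncard_setOf_isFirstHCross (y : Bool) (hi : 1 ≤ i) (hik : i ≤ k) :
    {p | p ∈ abPaths α 1 k true y ∧ IsFirstHCross α p i}.ncard =
      (nhcPaths α i true true).ncard * (abPaths α 1 (k - i) true y).ncard := by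
  rw [setOf_isFirstHCross_eq_image y hi hik, Set.InjOn.ncard_image, Set.ncard_prod]
  rintro ⟨q, r⟩ ⟨hq, -⟩ ⟨q', r'⟩ ⟨hq', -⟩ h
  obtain ⟨rfl, rfl⟩ := List.append_inj h (by rw [hq.1.length_eq, hq'.1.length_eq])
  rfl

lemma abPaths_eq_union (y : Bool) :
    abPaths α 1 k true y = nhcPaths α k true y ∪
      ⋃ i ∈ Finset.Ico 1 k, {p | p ∈ abPaths α 1 k true y ∧ IsFirstHCross α p i} := by
  ext p
  constructor
  · intro hp
    by_cases hnc : NoHCross α p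
    · exact Or.inl ⟨hp.1, hnc, hp.2⟩
    obtain ⟨i, hi⟩ := exists_isFirstHCross hnc
    exact Or.inr (Set.mem_biUnion (Finset.mem_Ico.2 ⟨hi.1.1, hi.1.lt_of_inL hp.1⟩) ⟨hp, hi⟩)
  · rintro (⟨hp, -, hf, hl⟩ | hp)
    · exact ⟨hp, hf, hl⟩
    · obtain ⟨i, -, hp, -⟩ := Set.mem_iUnion₂.1 hp
      exact hp

open Finset in
theorem ncard_abPaths_eq_add_sum (y : Bool) :
    (abPaths α 1 k true y).ncard = (nhcPaths α k true y).ncard +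
      ∑ i ∈ Ico 1 k, (nhcPaths α i true true).ncard * (abPaths α 1 (k - i) true y).ncard := by
  have hfin (i : ℕ) : {p | p ∈ abPaths α 1 k true y ∧ IsFirstHCross α p i}.Finite :=
    finite_of_forall_inL fun p hp => hp.1.1
  have hdisj : Disjoint (nhcPaths α k true y)
      (⋃ i ∈ Ico 1 k, {p | p ∈ abPaths α 1 k true y ∧ IsFirstHCross α p i}) :=
    Set.disjoint_iUnion₂_right.2 fun i _ => Set.disjoint_left.2 fun p hp hp' => hp.2.1 i hp'.2.1
  rw [abPaths_eq_union y, Set.ncard_union_eq hdisj (finite_of_forall_inL fun p hp => hp.1)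
      ((Ico 1 k).finite_toSet.biUnion fun i _ => hfin i), ← set_biUnion_coe,
    (Ico 1 k).finite_toSet.ncard_biUnion (fun i _ => hfin i)
      fun i _ j _ hij => Set.disjoint_left.2 fun p hi hj => hij (hi.2.eq hj.2),
    finsum_mem_coe_finset]
  congr 1
  refine sum_congr rfl fun i hi => ?_
  rw [mem_Ico] at hi
  exact ncard_setOf_isFirstHCross y hi.1 hi.2.le

end HorizontalCross

theorem gfOf_abPaths_eq_add_mul (α : ℕ) (y : Bool) :
    gfOf (fun k => abPaths α 1 k true y) =
      gfOf (fun k => nhcPaths α k true y) + nhcEE α * gfOf (fun k => abPaths α 1 k true y) := by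
  ext k
  rw [map_add, nhcEE, coeff_gfOf_mul, coeff_gfOf, coeff_gfOf]
  split_ifs with hk
  · simp [hk]
  · rw [ncard_abPaths_eq_add_sum y]
    push_cast
    rfl

lemma firstStep_reverse {p : LatticePath} {x : Bool} : FirstStep p.reverse x ↔ LastStep p x := by
  rw [FirstStep, LastStep, List.head?_reverse]

lemma lastStep_reverse {p : LatticePath} {x : Bool} : LastStep p.reverse x ↔ FirstStep p x := by
  rw [FirstStep, LastStep, List.getLast?_reverse]

lemma nhcPaths_false_true_eq_image (α k : ℕ) :
    nhcPaths α k false true = List.reverse '' nhcPaths α k true false := by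
  ext p
  constructor
  · rintro ⟨hp, hnc, hf, hl⟩
    exact ⟨p.reverse, ⟨hp.reverse, hnc.reverse hp, firstStep_reverse.2 hl,
      lastStep_reverse.2 hf⟩, p.reverse_reverse⟩
  · rintro ⟨q, ⟨hq, hnc, hf, hl⟩, rfl⟩
    exact ⟨hq.reverse, hnc.reverse hq, firstStep_reverse.2 hl, lastStep_reverse.2 hf⟩

theorem nhcNE_eq_nhcEN (α : ℕ) : nhcNE α = nhcEN α :=
  gfOf_congr fun k => (congrArg Set.ncard (nhcPaths_false_true_eq_image α k)).trans
    (Set.ncard_image_of_injective _ List.reverse_injective)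

theorem hEstar_eq_add (α : ℕ) : hEstar α = nhcEE α + nhcEN α := by
  refine gfOf_eq_add fun k hk => ?_
  rw [← Set.ncard_union_eq (Set.disjoint_left.2 fun p hp hp' =>
    Bool.false_ne_true (Option.some.inj ((Eq.symm hp'.2.2.2).trans hp.2.2.2)))
    (finite_of_forall_inL fun p hp => hp.1) (finite_of_forall_inL fun p hp => hp.1)]
  congr 1
  ext p
  constructor
  · rintro ⟨hp, hnc, hf⟩
    obtain ⟨y, hy⟩ := Option.isSome_iff_exists.1 (List.getLast?_isSome.2 (hp.ne_nil hk (by omega)))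
    cases y
    · exact Or.inr ⟨hp, hnc, hf, hy⟩
    · exact Or.inl ⟨hp, hnc, hf, hy⟩
  · rintro (⟨hp, hnc, hf, -⟩ | ⟨hp, hnc, hf, -⟩) <;> exact ⟨hp, hnc, hf⟩

/-- The `if` gives the value `1` at `a = m = 0`, where the quotient would be `0 / 0`. -/
noncomputable def rothe (t a m : ℕ) : ℚ :=
  if m = 0 then 1 else (a : ℚ) / (a + t * m : ℕ) * ((a + t * m).choose m : ℕ)

lemma rothe_zero_right (t a : ℕ) : rothe t a 0 = 1 := if_pos rfl

lemma rothe_zero_left {t m : ℕ} (hm : m ≠ 0) : rothe t 0 m = 0 := by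
  simp [rothe, hm]

lemma rothe_succ_succ {t : ℕ} (ht : 0 < t) (a m : ℕ) :
    rothe t (a + 1) (m + 1) = rothe t a (m + 1) + rothe t (a + t) m := by
  rcases Nat.eq_zero_or_pos m with rfl | hm
  · have : ((a + 1 + t : ℕ) : ℚ) ≠ 0 := by positivity
    have : ((a + t : ℕ) : ℚ) ≠ 0 := by positivity
    simp only [rothe, zero_add, mul_one, one_ne_zero, if_false, if_true, Nat.choose_one_right]
    field_simp
    push_cast
    ring
  · set N := a + t * (m + 1) with hN
    have hN1 : a + 1 + t * (m + 1) = N + 1 := by omega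
    have hNt : a + t + t * m = N := by rw [hN]; ring
    simp only [rothe, Nat.succ_ne_zero, hm.ne', if_false, hN1, hNt, ← hN]
    have hmN : m < N := by nlinarith
    have hup : ((N + 1).choose (m + 1) : ℚ) = (N + 1) * N.choose m / (m + 1) := by
      rw [eq_div_iff (by positivity)]
      exact_mod_cast (Nat.add_one_mul_choose_eq N m).symm
    have hdown : (N.choose (m + 1) : ℚ) = N.choose m * (N - m) / (m + 1) := by
      rw [eq_div_iff (by positivity), ← Nat.cast_sub hmN.le]
      exact_mod_cast Nat.choose_succ_right_eq N m
    have hNa : (N : ℚ) = a + t * (m + 1) := by rw [hN]; push_cast; ring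
    have : (N : ℚ) ≠ 0 := by positivity
    push_cast
    rw [hup, hdown]
    field_simp
    rw [hNa]
    ring

open Finset in
theorem sum_antidiagonal_rothe_mul_choose {t : ℕ} (ht : 0 < t) (b : ℚ) (K a : ℕ) :
    ∑ x ∈ antidiagonal K, rothe t a x.1 * Ring.choose (b + t * x.2) x.2 =
      Ring.choose (a + b + t * K) K := by
  induction K generalizing a with
  | zero => simp [rothe_zero_right]
  | succ K ihK =>
    induction a with
    | zero =>
      rw [Nat.sum_antidiagonal_succ]
      simp [rothe_zero_left, rothe_zero_right]
    | succ a iha =>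
      rw [Nat.sum_antidiagonal_succ] at iha ⊢
      simp only [rothe_zero_right, rothe_succ_succ ht, add_mul, sum_add_distrib,
        ← add_assoc] at iha ⊢
      rw [iha, ihK]
      have e1 : ((a + 1 : ℕ) : ℚ) + b + t * (K + 1 : ℕ) = a + b + t * (K + 1 : ℕ) + 1 := by
        push_cast; ring
      have e2 : ((a + t : ℕ) : ℚ) + b + t * K = a + b + t * (K + 1 : ℕ) := by
        push_cast; ring
      rw [e1, e2, Ring.choose_succ_succ, add_comm (Ring.choose _ K)]

noncomputable def hEstarClosedForm (α : ℕ) : PowerSeries ℚ :=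
  PowerSeries.mk (fun k => if k = 0 then 0 else
    (((α * (α + 2) : ℕ) : ℚ) / (((α + 1) * k + 1 : ℕ) : ℚ))
      * ((((α + 1) * k + 1).choose (k - 1) : ℕ) : ℚ))

lemma coeff_hEstarClosedForm_succ (α m : ℕ) :
    PowerSeries.coeff (m + 1) (hEstarClosedForm α) = α * rothe (α + 1) (α + 2) m := by
  rw [hEstarClosedForm, PowerSeries.coeff_mk, if_neg m.succ_ne_zero, Nat.add_sub_cancel,
    show (α + 1) * (m + 1) + 1 = α + 2 + (α + 1) * m by ring]
  rcases eq_or_ne m 0 with rfl | hm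
  · have : ((α + 2 : ℕ) : ℚ) ≠ 0 := by positivity
    rw [rothe_zero_right, mul_zero, add_zero, Nat.choose_zero_right]
    push_cast
    field_simp
  · rw [rothe, if_neg hm]
    push_cast
    ring

lemma coeff_one_add_geeSer {α : ℕ} (hα : 1 ≤ α) (j : ℕ) :
    PowerSeries.coeff j (1 + geeSer α 1) = Ring.choose (-2 + ((α + 1 : ℕ) : ℚ) * j) j := by
  rw [map_add, PowerSeries.coeff_one, geeSer, PowerSeries.coeff_mk]
  rcases eq_or_ne j 0 with rfl | hj
  · simp
  · have h2 : 2 ≤ (α + 1) * j := by nlinarith [Nat.one_le_iff_ne_zero.2 hj]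
    rw [if_neg hj, if_neg hj, zero_add, one_mul,
      show (-2 : ℚ) + ((α + 1 : ℕ) : ℚ) * j = (((α + 1) * j - 2 : ℕ) : ℚ) by
        push_cast [Nat.cast_sub h2]; ring,
      Ring.choose_natCast]

lemma choose_add_choose_eq_mul_choose {α : ℕ} (hα : 1 ≤ α) (K : ℕ) :
    ((α + 1) * (K + 1) - 2).choose (1 * (K + 1)) + ((α + 1) * (K + 1) - 2).choose (α * (K + 1) - 1)
      = α * ((α + 1) * K + α).choose K := by
  have e1 : (α + 1) * (K + 1) = α * K + α + K + 1 := by ring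
  have e2 : (α + 1) * K = α * K + K := by ring
  have e3 : α * (K + 1) = α * K + α := by ring
  obtain ⟨n, hn⟩ : ∃ n, (α + 1) * K + α = n + 1 := ⟨(α + 1) * K + α - 1, by omega⟩
  rw [show (α + 1) * (K + 1) - 2 = n by omega, show α * (K + 1) - 1 = n - K by omega,
    one_mul, Nat.choose_symm (by omega), hn, add_comm, ← Nat.choose_succ_succ']
  apply Nat.eq_of_mul_eq_mul_right (by omega : 0 < K + 1)
  rw [Nat.choose_succ_right_eq, show n + 1 - K = α * (K + 1) by omega]
  ring

theorem hEstarClosedForm_mul_one_add_geeSer {α : ℕ} (hα : 1 ≤ α) :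
    hEstarClosedForm α * (1 + geeSer α 1) = geeSer α 1 + genSer α 1 := by
  ext k
  rcases k with _ | K
  · simp [hEstarClosedForm, geeSer, genSer]
  rw [PowerSeries.coeff_mul, Finset.Nat.sum_antidiagonal_succ]
  simp only [coeff_hEstarClosedForm_succ, coeff_one_add_geeSer hα, mul_assoc,
    ← Finset.mul_sum, sum_antidiagonal_rothe_mul_choose (Nat.succ_pos α)]
  rw [show PowerSeries.coeff 0 (hEstarClosedForm α) = 0 by
      rw [hEstarClosedForm, PowerSeries.coeff_mk, if_pos rfl], zero_mul, zero_add,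
    show ((α + 2 : ℕ) : ℚ) + -2 + (α.succ : ℚ) * K = ((α + 1) * K + α : ℕ) by push_cast; ring,
    Ring.choose_natCast, map_add, geeSer, genSer, PowerSeries.coeff_mk, PowerSeries.coeff_mk,
    if_neg K.succ_ne_zero, if_neg K.succ_ne_zero, ← Nat.cast_add,
    choose_add_choose_eq_mul_choose hα]
  push_cast
  rfl

lemma one_add_geeSer_ne_zero (α : ℕ) : 1 + geeSer α 1 ≠ 0 := fun h => by
  simpa [geeSer] using congrArg PowerSeries.constantCoeff h

/-- For `β = 1`, `α ≥ 1`: `nhc_ee·(1 + g_ee) = g_ee`,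
`nhc_en·(1 + g_ee) = g_en`, `nhc_ne = nhc_en`, and
`h_{E✳} = nhc_ee + nhc_en = Σ_{k≥1} (α(α+2)/((α+1)k+1))·C((α+1)k+1, k−1)·xᵏ`. -/
theorem statement18 (α : ℕ) (hα : 1 ≤ α) :
    nhcEE α * (1 + geeSer α 1) = geeSer α 1 ∧
    nhcEN α * (1 + geeSer α 1) = genSer α 1 ∧
    nhcNE α = nhcEN α ∧
    nhcEE α + nhcEN α = hEstar α ∧
    hEstar α = PowerSeries.mk (fun k => if k = 0 then 0 else
      (((α * (α + 2) : ℕ) : ℚ) / (((α + 1) * k + 1 : ℕ) : ℚ))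
        * ((((α + 1) * k + 1).choose (k - 1) : ℕ) : ℚ)) := by
  have hEE : geeSer α 1 = nhcEE α + nhcEE α * geeSer α 1 := by
    have := gfOf_abPaths_eq_add_mul α true
    rwa [gfOf_abPaths_true_true hα le_rfl] at this
  have hEN : genSer α 1 = nhcEN α + nhcEE α * genSer α 1 := by
    have := gfOf_abPaths_eq_add_mul α false
    rwa [gfOf_abPaths_true_false hα le_rfl] at this
  have h1 : nhcEE α * (1 + geeSer α 1) = geeSer α 1 := by linear_combination -hEE
  have h2 : nhcEN α * (1 + geeSer α 1) = genSer α 1 := by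
    linear_combination (-(1 + geeSer α 1)) * hEN - genSer α 1 * h1
  refine ⟨h1, h2, nhcNE_eq_nhcEN α, (hEstar_eq_add α).symm, ?_⟩
  refine mul_right_cancel₀ (one_add_geeSer_ne_zero α) ?_
  rw [hEstar_eq_add, add_mul, h1, h2, ← hEstarClosedForm_mul_one_add_geeSer hα]
  rfl
end
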